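/- arXiv:2007.14801 — 7 statements merged into one kernel-verified Lean document; each statement's English description precedes it below -/
import Mathlib

section
/- Let F be a real closed linear ordered field and let F₀ be a maximal archimedean subfield of F. Then F₀ is real closed: every b ∈ F₀ with b > 0 has a square root lying in F₀, and every monic polynomial of odd degree with all coefficients in F₀ has a root lying in F₀. -/
/-!
The roots of a monic polynomial are bounded by `1 + ∑ |aᵢ|` (Cauchy's bound), and for an
archimedean `F₀` this bound is itself bounded by a natural number. Hence the relative algebraic
closure of an archimedean subfield is again archimedean, so a maximal archimedean subfield `F₀`
is algebraically closed in `F`. Square roots and roots of odd-degree polynomials, which exist in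
`F` by real closedness, are algebraic over `F₀`, hence lie in `F₀`.
-/

/-- A linear ordered field is real closed (in the sense used in the paper) if every
positive element has a square root and every monic polynomial of odd degree has a root. -/
def RealClosedOF (F : Type*) [Field F] [LinearOrder F] [IsStrictOrderedRing F] : Prop :=
  (∀ b : F, 0 < b → ∃ y : F, y ^ 2 = b) ∧
  (∀ p : Polynomial F, p.Monic → Odd p.natDegree → ∃ x : F, p.eval x = 0)

/-- A subfield of a linear ordered field is archimedean if each of its elements is
bounded by a natural number. -/
def ArchSubfield {F : Type*} [Field F] [LinearOrder F] [IsStrictOrderedRing F] (F₀ : Subfield F) : Prop :=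
  ∀ x ∈ F₀, ∃ n : ℕ, x ≤ (n : F)

/-- A maximal archimedean subfield: an archimedean subfield such that every archimedean
subfield containing it equals it. -/
def MaxArchSubfield {F : Type*} [Field F] [LinearOrder F] [IsStrictOrderedRing F] (F₀ : Subfield F) : Prop :=
  ArchSubfield F₀ ∧ ∀ F₁ : Subfield F, ArchSubfield F₁ → F₀ ≤ F₁ → F₁ = F₀

open Polynomial Finset

theorem Polynomial.Monic.abs_le_one_add_sum_abs_coeff_of_eval_eq_zero {F : Type*} [Field F]
    [LinearOrder F] [IsStrictOrderedRing F] {p : F[X]} (hp : p.Monic) {z : F}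
    (hz : p.eval z = 0) : |z| ≤ 1 + ∑ i ∈ range p.natDegree, |p.coeff i| := by
  set S := ∑ i ∈ range p.natDegree, |p.coeff i|
  have hS : 0 ≤ S := sum_nonneg fun i _ => abs_nonneg _
  rcases le_or_gt |z| 1 with hle | hgt
  · linarith
  obtain ⟨m, hm⟩ : ∃ m, p.natDegree = m + 1 :=
    Nat.exists_eq_succ_of_ne_zero fun h0 => by simp [hp.natDegree_eq_zero.mp h0] at hz
  have hzm : z ^ (m + 1) = -∑ i ∈ range (m + 1), p.coeff i * z ^ i := by
    rw [eval_eq_sum_range, sum_range_succ, hp.coeff_natDegree, one_mul, hm] at hz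
    linear_combination hz
  have hbound : |z| * |z| ^ m ≤ S * |z| ^ m := calc
    |z| * |z| ^ m = |∑ i ∈ range (m + 1), p.coeff i * z ^ i| := by
      rw [← pow_succ', ← abs_pow, hzm, abs_neg]
    _ ≤ ∑ i ∈ range (m + 1), |p.coeff i| * |z| ^ m := by
      refine (abs_sum_le_sum_abs _ _).trans (sum_le_sum fun i hi => ?_)
      rw [abs_mul, abs_pow]
      gcongr
      · exact hgt.le
      · exact Nat.lt_succ_iff.mp (mem_range.mp hi)
    _ = S * |z| ^ m := by rw [← sum_mul, ← hm]
  linarith [le_of_mul_le_mul_right hbound (pow_pos (one_pos.trans hgt) m)]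

theorem isIntegral_of_monic_of_eval_eq_zero {R A : Type*} [CommRing R] [CommRing A]
    [Algebra R A] {p : A[X]} (hp : p.Monic) (hc : ∀ i, p.coeff i ∈ Set.range (algebraMap R A))
    {x : A} (hx : p.eval x = 0) : IsIntegral R x := by
  obtain ⟨q, hqp, -, hq⟩ :=
    lifts_and_natDegree_eq_and_monic ((lifts_iff_coeff_lifts p).mpr hc) hp
  exact ⟨q, hq, by rw [eval₂_eq_eval_map, hqp, hx]⟩

theorem Subfield.abs_mem {F : Type*} [Field F] [LinearOrder F] {F₀ : Subfield F} {x : F}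
    (hx : x ∈ F₀) : |x| ∈ F₀ := by
  rcases abs_choice x with h | h <;> rw [h]
  exacts [hx, F₀.neg_mem hx]

section ArchSubfield

variable {F : Type*} [Field F] [LinearOrder F] [IsStrictOrderedRing F] {F₀ : Subfield F}

theorem ArchSubfield.exists_le_of_isIntegral (h : ArchSubfield F₀) {z : F}
    (hz : IsIntegral F₀ z) : ∃ n : ℕ, z ≤ n := by
  set p := (minpoly F₀ z).map (algebraMap F₀ F)
  have hcoeff (i : ℕ) : p.coeff i ∈ F₀ := by
    rw [coeff_map]
    exact ((minpoly F₀ z).coeff i).2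
  have hroot : p.eval z = 0 := by rw [eval_map, ← aeval_def, minpoly.aeval]
  obtain ⟨n, hn⟩ :=
    h _ (add_mem F₀.one_mem (sum_mem fun i _ => Subfield.abs_mem (hcoeff i)))
  exact ⟨n, (le_abs_self z).trans
    (((minpoly.monic hz).map _).abs_le_one_add_sum_abs_coeff_of_eval_eq_zero hroot |>.trans hn)⟩

theorem ArchSubfield.algebraicClosure (h : ArchSubfield F₀) :
    ArchSubfield (algebraicClosure F₀ F).toSubfield :=
  fun _ hz => h.exists_le_of_isIntegral hz

theorem MaxArchSubfield.mem_of_isIntegral (h : MaxArchSubfield F₀) {x : F}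
    (hx : IsIntegral F₀ x) : x ∈ F₀ := by
  have hclosure := h.2 _ h.1.algebraicClosure
    fun a ha => (algebraicClosure F₀ F).algebraMap_mem ⟨a, ha⟩
  rw [← hclosure]
  exact hx

end ArchSubfield

/-- A maximal archimedean subfield of a real closed linear ordered field is real closed:
positive elements of `F₀` have square roots in `F₀`, and monic odd-degree polynomials
with coefficients in `F₀` have roots in `F₀`. -/
theorem maxArchSubfield_realClosed (F : Type*) [Field F] [LinearOrder F] [IsStrictOrderedRing F]
    (hF : RealClosedOF F) (F₀ : Subfield F) (hmax : MaxArchSubfield F₀) :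
    (∀ b ∈ F₀, (0 : F) < b → ∃ y ∈ F₀, y ^ 2 = b) ∧
    (∀ p : Polynomial F, p.Monic → Odd p.natDegree → (∀ i : ℕ, p.coeff i ∈ F₀) →
      ∃ x ∈ F₀, p.eval x = 0) := by
  refine ⟨fun b hb hb0 => ?_, fun p hp hodd hc => ?_⟩
  · obtain ⟨y, hy⟩ := hF.1 b hb0
    have hy2 : IsIntegral F₀ (y ^ 2) := hy ▸ isIntegral_algebraMap (x := (⟨b, hb⟩ : F₀))
    exact ⟨y, hmax.mem_of_isIntegral (hy2.of_pow two_pos), hy⟩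
  · obtain ⟨x, hx⟩ := hF.2 p hp hodd
    have hxint : IsIntegral F₀ x :=
      isIntegral_of_monic_of_eval_eq_zero hp (fun i => ⟨⟨_, hc i⟩, rfl⟩) hx
    exact ⟨x, hmax.mem_of_isIntegral hxint, hx⟩
end

section
/- Let F be a real closed linear ordered field, F₀ a maximal archimedean subfield of F, and F₁ any archimedean subfield of F. Then there is an injective ring homomorphism φ : F₁ → F₀ that preserves order (x ≤ y ↔ φ(x) ≤ φ(y)); i.e., F₀ is the greatest archimedean subfield of F up to isomorphic embedding of ordered fields. -/
/-
The elements of `F` bounded by an integer form a valuation ring `V` whose residue field is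
linearly ordered. Archimedean subfields are exactly the subfields contained in `V`, and the residue
map embeds each of them into the residue field as an ordered field. As `V` is integrally closed, a
maximal archimedean subfield `F₀` is integrally closed in `F`, hence real closed.

Let `a` lie in an archimedean subfield. If its residue is algebraic over `F₀`, it is the residue of
an element of `F₀`: irreducible polynomials over a real closed field have degree at most two (the
Galois-theoretic proof of the fundamental theorem of algebra), so a real closed field has no proper
ordered algebraic extension. Otherwise `s(a)` is a unit of `V` for every nonzero `s ∈ F₀[X]`, so
`F₀(a) ⊆ V` is archimedean and `a ∈ F₀` by maximality. Either way the residues of an archimedean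
subfield are residues of elements of `F₀`, and the embedding of `F₀` can be inverted on them.
-/

open Polynomial IntermediateField Module

theorem Polynomial.eval₂_eq_of_natDegree_eq_two {R S : Type*} [Semiring R] [CommSemiring S]
    (f : R →+* S) {q : R[X]} (h : q.natDegree = 2) (x : S) :
    q.eval₂ f x = f (q.coeff 2) * (x * x) + f (q.coeff 1) * x + f (q.coeff 0) := by
  rw [eval₂_eq_sum_range, h, Finset.sum_range_succ, Finset.sum_range_succ, Finset.sum_range_one]
  ring

theorem Irreducible.not_isSquare_discrim {K : Type*} [Field K] [NeZero (2 : K)] {q : K[X]}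
    (hq : Irreducible q) (h : q.natDegree = 2) :
    ¬IsSquare (discrim (q.coeff 2) (q.coeff 1) (q.coeff 0)) := by
  intro hsq
  have hlead : q.coeff 2 ≠ 0 := by
    rw [← h]; exact leadingCoeff_ne_zero.2 hq.ne_zero
  obtain ⟨x, hx⟩ := exists_quadratic_eq_zero hlead hsq
  have hroot : q.IsRoot x := by
    rwa [IsRoot, eval, eval₂_eq_of_natDegree_eq_two _ h]
  have := degree_eq_one_of_irreducible_of_root hq hroot
  rw [degree_eq_natDegree hq.ne_zero, h] at this
  exact absurd this (by decide)

theorem finrank_eq_one_iff_forall_mem_range {K E : Type*} [Field K] [Field E] [Algebra K E] :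
    finrank K E = 1 ↔ ∀ x : E, x ∈ (algebraMap K E).range := by
  rw [← Subalgebra.bot_eq_top_iff_finrank_eq_one, Algebra.eq_top_iff]
  simp [Algebra.mem_bot]

theorem finrank_ne_two_of_forall_isSquare {K E : Type*} [Field K] [Field E] [Algebra K E]
    [NeZero (2 : K)] (hsq : ∀ z : K, IsSquare z) : finrank K E ≠ 2 := by
  intro h2
  have : FiniteDimensional K E := Module.finite_of_finrank_eq_succ h2
  suffices finrank K E = 1 by omega
  refine finrank_eq_one_iff_forall_mem_range.2 fun x => ?_
  have hx := IsIntegral.of_finite K x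
  rw [← minpoly.natDegree_eq_one_iff]
  have hpos := minpoly.natDegree_pos hx
  have hle := minpoly.natDegree_le (A := K) x
  have hne := mt (minpoly.irreducible hx).not_isSquare_discrim (not_not.2 (hsq _))
  omega

theorem IsGalois.exists_intermediateField_finrank_eq_prime {K L : Type*} [Field K] [Field L]
    [Algebra K L] [FiniteDimensional K L] [IsGalois K L] {p n : ℕ} [Fact p.Prime]
    (h : finrank K L = p ^ (n + 1)) : ∃ E : IntermediateField K L, finrank K E = p := by
  rw [← IsGalois.card_aut_eq_finrank] at h
  obtain ⟨H, hH⟩ := Sylow.exists_subgroup_card_pow_prime (G := L ≃ₐ[K] L) p (n := n)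
    (h ▸ pow_dvd_pow p n.le_succ)
  refine ⟨fixedField H, ?_⟩
  rw [finrank_eq_fixingSubgroup_index, fixingSubgroup_fixedField]
  have := H.card_mul_index
  rw [hH, h, pow_succ] at this
  exact Nat.eq_of_mul_eq_mul_left (pow_pos (Fact.out : p.Prime).pos n) this

theorem isIntegral_of_sq_eq_neg_one {K L : Type*} [CommRing K] [Ring L] [Algebra K L] {i : L}
    (hi : i ^ 2 = -1) : IsIntegral K i :=
  ⟨X ^ 2 + 1, monic_X_pow_add_C 1 two_ne_zero, by simp [hi]⟩

theorem IntermediateField.exists_eq_add_mul_of_mem_adjoin {K L : Type*} [Field K] [Field L]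
    [Algebra K L] {i : L} (hi : i ^ 2 = -1) {z : L} (hz : z ∈ K⟮i⟯) :
    ∃ x y : K, z = algebraMap K L x + algebraMap K L y * i := by
  rw [← mem_toSubalgebra,
    adjoin_simple_toSubalgebra_of_isAlgebraic (isIntegral_of_sq_eq_neg_one hi).isAlgebraic] at hz
  induction hz using Algebra.adjoin_induction with
  | mem _ h => exact ⟨0, 1, by simp [Set.mem_singleton_iff.1 h]⟩
  | algebraMap x => exact ⟨x, 0, by simp⟩
  | add _ _ _ _ h₁ h₂ =>
    obtain ⟨x₁, y₁, rfl⟩ := h₁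
    obtain ⟨x₂, y₂, rfl⟩ := h₂
    exact ⟨x₁ + x₂, y₁ + y₂, by simp only [map_add]; ring⟩
  | mul _ _ _ _ h₁ h₂ =>
    obtain ⟨x₁, y₁, rfl⟩ := h₁
    obtain ⟨x₂, y₂, rfl⟩ := h₂
    refine ⟨x₁ * x₂ - y₁ * y₂, x₁ * y₂ + y₁ * x₂, ?_⟩
    simp only [map_add, map_sub, map_mul]
    linear_combination (algebraMap K L y₁ * algebraMap K L y₂) * hi

namespace IsRealClosed

variable {K : Type*} [Field K] [IsRealClosed K]

theorem natDegree_eq_one_of_odd {p : K[X]} (hp : Irreducible p) (hodd : Odd p.natDegree) :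
    p.natDegree = 1 := by
  obtain ⟨x, hx⟩ := exists_isRoot_of_odd_natDegree hodd
  have := degree_eq_one_of_irreducible_of_root hp hx
  rwa [degree_eq_natDegree hp.ne_zero, Nat.cast_eq_one] at this

theorem finrank_eq_one_of_odd {E : Type*} [Field E] [Algebra K E] [FiniteDimensional K E]
    (h : Odd (finrank K E)) : finrank K E = 1 :=
  finrank_eq_one_iff_forall_mem_range.2 fun x =>
    have hx := IsIntegral.of_finite K x
    minpoly.natDegree_eq_one_iff.1 <|
      natDegree_eq_one_of_odd (minpoly.irreducible hx) (h.of_dvd_nat (minpoly.degree_dvd hx))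

theorem exists_finrank_eq_two_pow {L : Type*} [Field L] [Algebra K L] [FiniteDimensional K L]
    [IsGalois K L] : ∃ n, finrank K L = 2 ^ n := by
  have : Fact (Nat.Prime 2) := ⟨Nat.prime_two⟩
  obtain ⟨P⟩ : Nonempty (Sylow 2 (L ≃ₐ[K] L)) := inferInstance
  have hodd : Odd (finrank K (fixedField (P : Subgroup (L ≃ₐ[K] L)))) := by
    rw [finrank_eq_fixingSubgroup_index, fixingSubgroup_fixedField, Nat.odd_iff]
    exact Nat.two_dvd_ne_zero.1 P.not_dvd_index
  have hP := finrank_eq_one_of_odd hodd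
  rw [finrank_eq_fixingSubgroup_index, fixingSubgroup_fixedField, Subgroup.index_eq_one] at hP
  refine ⟨(Nat.card (L ≃ₐ[K] L)).factorization 2, ?_⟩
  rw [← IsGalois.card_aut_eq_finrank, ← P.card_eq_multiplicity, hP, Subgroup.card_top]

section LinearOrder

variable [LinearOrder K] [IsStrictOrderedRing K]

theorem exists_nonneg_sq_eq {x : K} (hx : 0 ≤ x) : ∃ r, 0 ≤ r ∧ r ^ 2 = x := by
  obtain ⟨r, rfl⟩ := IsSquare.of_nonneg hx
  exact ⟨|r|, abs_nonneg r, by rw [sq_abs, sq]⟩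

theorem exists_sq_sub_sq_eq (x y : K) : ∃ c d : K, c ^ 2 - d ^ 2 = x ∧ 2 * c * d = y := by
  obtain ⟨r, hr0, hr⟩ := exists_nonneg_sq_eq (by positivity : 0 ≤ x ^ 2 + y ^ 2)
  have hxr : |x| ≤ r := abs_le_of_sq_le_sq (by nlinarith) hr0
  obtain ⟨c, hc0, hc⟩ := exists_nonneg_sq_eq (x := (r + x) / 2) (by linarith [neg_abs_le x])
  obtain ⟨d, hd0, hd⟩ := exists_nonneg_sq_eq (x := (r - x) / 2) (by linarith [le_abs_self x])
  have hcd : 2 * c * d = |y| := by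
    rw [← sq_eq_sq₀ (by positivity) (abs_nonneg y), sq_abs]
    linear_combination 4 * d ^ 2 * hc + (r + x) * 2 * hd + hr
  rcases le_total 0 y with hy | hy
  · exact ⟨c, d, by linear_combination hc - hd, by rw [hcd, abs_of_nonneg hy]⟩
  · exact ⟨c, -d, by linear_combination hc - hd, by linear_combination -hcd - abs_of_nonpos hy⟩

theorem isSquare_of_mem_adjoin {L : Type*} [Field L] [Algebra K L] {i : L} (hi : i ^ 2 = -1)
    (z : K⟮i⟯) : IsSquare z := by
  obtain ⟨x, y, hz⟩ := exists_eq_add_mul_of_mem_adjoin hi z.2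
  obtain ⟨c, d, rfl, rfl⟩ := exists_sq_sub_sq_eq x y
  let i' : K⟮i⟯ := ⟨i, mem_adjoin_simple_self K i⟩
  refine ⟨algebraMap K K⟮i⟯ c + algebraMap K K⟮i⟯ d * i', Subtype.ext ?_⟩
  simp only [hz, map_sub, map_mul, map_pow, map_ofNat, MulMemClass.coe_mul, AddMemClass.coe_add,
    SubalgebraClass.coe_algebraMap]
  linear_combination (-(algebraMap K L d) ^ 2) * hi

theorem finrank_le_two_of_isGalois {L : Type*} [Field L] [Algebra K L] [FiniteDimensional K L]
    [IsGalois K L] {i : L} (hi : i ^ 2 = -1) : finrank K L ≤ 2 := by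
  have hKJ : finrank K K⟮i⟯ ≤ 2 := by
    rw [adjoin.finrank (isIntegral_of_sq_eq_neg_one hi)]
    exact natDegree_le_natDegree (minpoly.min K i (monic_X_pow_add_C 1 two_ne_zero) (by simp [hi]))
      |>.trans (by compute_degree!)
  have : IsGalois K⟮i⟯ L := IsGalois.tower_top_intermediateField _
  have : CharZero K⟮i⟯ := charZero_of_injective_algebraMap (algebraMap K K⟮i⟯).injective
  obtain ⟨n, hn⟩ := exists_finrank_eq_two_pow (K := K) (L := L)
  rw [← finrank_mul_finrank K K⟮i⟯ L] at hn ⊢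
  obtain ⟨b, -, hb⟩ := (Nat.dvd_prime_pow Nat.prime_two).1 (Dvd.intro_left _ hn)
  have : Fact (Nat.Prime 2) := ⟨Nat.prime_two⟩
  cases b with
  | zero => rwa [hb, pow_zero, mul_one]
  | succ b =>
    obtain ⟨E, hE⟩ := IsGalois.exists_intermediateField_finrank_eq_prime hb
    exact absurd hE (finrank_ne_two_of_forall_isSquare (isSquare_of_mem_adjoin hi))

theorem natDegree_le_two_of_irreducible {p : K[X]} (hp : Irreducible p) : p.natDegree ≤ 2 := by
  let L := (p * (X ^ 2 + 1)).SplittingField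
  have : IsGalois K L := ⟨⟩
  have hq : (X ^ 2 + 1 : K[X]) ≠ 0 := (monic_X_pow_add_C (1 : K) two_ne_zero).ne_zero
  have hsplits := SplittingField.splits (p * (X ^ 2 + 1))
  have h0 : (p * (X ^ 2 + 1)).map (algebraMap K L) ≠ 0 :=
    Polynomial.map_ne_zero (mul_ne_zero hp.ne_zero hq)
  have hqdeg : (X ^ 2 + 1 : K[X]).degree = 2 := by compute_degree!
  obtain ⟨i, hi⟩ := (hsplits.of_dvd h0 (map_dvd _ (dvd_mul_left _ p))).exists_eval_eq_zero
    (by rw [degree_map, hqdeg]; exact two_ne_zero)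
  rw [eval_map_algebraMap, map_add, map_pow, aeval_X, map_one, add_eq_zero_iff_eq_neg] at hi
  have hdvd := hp.natDegree_dvd_finrank
    (hsplits.of_dvd h0 (map_dvd (algebraMap K L) (dvd_mul_right p (X ^ 2 + 1))))
  exact (Nat.le_of_dvd finrank_pos hdvd).trans (finrank_le_two_of_isGalois hi)

theorem mem_range_of_eval₂_eq_zero {R : Type*} [Field R] [LinearOrder R] [IsOrderedRing R]
    (f : K →+*o R) {p : K[X]} (hp : p ≠ 0) {x : R} (hx : p.eval₂ f x = 0) : x ∈ Set.range f := by
  let : Algebra K R := (f : K →+* R).toAlgebra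
  have hint : IsIntegral K x := IsAlgebraic.isIntegral ⟨p, hp, hx⟩
  have hf : StrictMono f := (OrderHomClass.mono f).strictMono_of_injective
    (f : K →+* R).injective
  have hne : (minpoly K x).natDegree ≠ 2 := fun h2 => by
    refine (minpoly.irreducible hint).not_isSquare_discrim h2 (IsSquare.of_nonneg ?_)
    have hq := minpoly.aeval K x
    rw [aeval_def, eval₂_eq_of_natDegree_eq_two _ h2] at hq
    rw [← hf.le_iff_le, map_zero]
    have hd := discrim_eq_sq_of_quadratic_eq_zero hq
    simp only [discrim, map_sub, map_mul, map_pow, map_ofNat] at hd ⊢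
    exact (sq_nonneg _).trans_eq hd.symm
  have := minpoly.natDegree_pos hint
  have := natDegree_le_two_of_irreducible (minpoly.irreducible hint)
  exact minpoly.natDegree_eq_one_iff.1 (by omega)

end LinearOrder

end IsRealClosed

theorem OrderRingHom.exists_ringHom_le_iff_of_range_subset {A B C : Type*} [Field A]
    [LinearOrder A] [Field B] [LinearOrder B] [Field C] [PartialOrder C] (f : A →+*o C)
    (g : B →+*o C) (h : Set.range f ⊆ Set.range g) :
    ∃ φ : A →+* B, Function.Injective φ ∧ ∀ x y, x ≤ y ↔ φ x ≤ φ y := by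
  let g' : B →+* C := g
  have hmem : ∀ a, (f : A →+* C) a ∈ g'.fieldRange := fun a => h ⟨a, rfl⟩
  let φ := g'.rangeRestrictFieldEquiv.symm.toRingHom.comp ((f : A →+* C).codRestrict _ hmem)
  have hφ : ∀ a, g (φ a) = f a := fun a => g'.rangeRestrictFieldEquiv_apply_symm_apply _
  have hf := (OrderHomClass.mono f).strictMono_of_injective (f : A →+* C).injective
  have hg := (OrderHomClass.mono g).strictMono_of_injective g'.injective
  exact ⟨φ, φ.injective, fun x y => by rw [← hf.le_iff_le, ← hφ, ← hφ, hg.le_iff_le]⟩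

theorem RealClosedOF.isRealClosed {F : Type*} [Field F] [LinearOrder F] [IsStrictOrderedRing F]
    (hF : RealClosedOF F) : IsRealClosed F := by
  refine .of_linearOrderedField (fun {x} hx => ?_) (fun {f} hf => ?_)
  · rcases hx.eq_or_lt with rfl | hx
    · exact .zero
    · obtain ⟨y, rfl⟩ := hF.1 x hx
      exact ⟨y, sq y⟩
  · have hf0 : f ≠ 0 := by rintro rfl; simp at hf
    obtain ⟨x, hx⟩ := hF.2 _ (monic_mul_leadingCoeff_inv hf0)
      (by rwa [natDegree_mul_leadingCoeff_inv f hf0])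
    exact ⟨x, by simpa [hf0] using hx⟩

section FiniteElements

open ArchimedeanClass

variable {F : Type*} [Field F] [LinearOrder F] [IsStrictOrderedRing F]

theorem archSubfield_iff {K : Subfield F} : ArchSubfield K ↔ ∀ x ∈ K, 0 ≤ mk x := by
  refine ⟨fun hK x hx => ?_, fun hK x hx => exists_nat_ge_of_mk_nonneg (hK x hx)⟩
  obtain ⟨n, hn⟩ := hK x hx
  obtain ⟨m, hm⟩ := hK (-x) (K.neg_mem hx)
  refine (le_min ?_ (mk_natCast_nonneg n)).trans (min_le_mk_of_le_of_le (neg_le.1 hm) hn)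
  rw [mk_neg]
  exact mk_natCast_nonneg m

namespace ArchSubfield

variable {K : Subfield F} (hK : ArchSubfield K)
include hK

theorem mk_nonneg {x : F} (hx : x ∈ K) : 0 ≤ mk x := archSubfield_iff.1 hK x hx

noncomputable def toFiniteElement : K →+*o FiniteElement F where
  toFun x := .mk x (hK.mk_nonneg x.2)
  map_one' := rfl
  map_mul' _ _ := rfl
  map_zero' := rfl
  map_add' _ _ := rfl
  monotone' _ _ h := h

noncomputable def residue : K →+*o FiniteResidueField F :=
  FiniteResidueField.mk.comp hK.toFiniteElement

theorem val_eval₂_toFiniteElement (s : K[X]) (a : FiniteElement F) :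
    (s.eval₂ (hK.toFiniteElement : K →+* FiniteElement F) a).1 = aeval a.1 s :=
  hom_eval₂ s _ (addValuation F).toValuation.valuationSubring.subtype a

theorem mk_nonneg_of_isIntegral {x : F} (hx : IsIntegral K x) : 0 ≤ mk x := by
  let V := (addValuation F).toValuation.valuationSubring
  let ι : K →+* V := (hK.toFiniteElement : K →+* FiniteElement F)
  obtain ⟨y, rfl⟩ := IsIntegrallyClosed.isIntegral_iff.1 (hx.map_of_comp_eq ι (RingHom.id F) rfl)
  exact y.2

end ArchSubfield

namespace MaxArchSubfield

variable {F₀ : Subfield F} (hmax : MaxArchSubfield F₀)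
include hmax

theorem mem_of_adjoin_mk_nonneg {x : F} (hx : ∀ y ∈ F₀⟮x⟯, 0 ≤ mk y) : x ∈ F₀ := by
  rw [← hmax.2 _ (archSubfield_iff.2 hx) (fun c hc => F₀⟮x⟯.algebraMap_mem ⟨c, hc⟩)]
  exact mem_adjoin_simple_self F₀ x

theorem mem_of_isIntegral_s5 {x : F} (hx : IsIntegral F₀ x) : x ∈ F₀ :=
  have : FiniteDimensional F₀ F₀⟮x⟯ := adjoin.finiteDimensional hx
  hmax.mem_of_adjoin_mk_nonneg fun y hy =>
    hmax.1.mk_nonneg_of_isIntegral (IsIntegral.of_finite F₀ (⟨y, hy⟩ : F₀⟮x⟯)).algebraMap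

theorem isRealClosed [IsRealClosed F] : IsRealClosed F₀ := by
  refine .of_linearOrderedField (fun {c} hc => ?_) (fun {f} hf => ?_)
  · obtain ⟨y, hy⟩ := IsRealClosed.nonneg_iff_isSquare.1 (show (0 : F) ≤ c from hc)
    have hyint : IsIntegral F₀ y := ⟨X ^ 2 - C c, monic_X_pow_sub_C c two_ne_zero, by
      rw [← aeval_def, map_sub, map_pow, aeval_X, aeval_C, sq, ← hy]; exact sub_self _⟩
    exact ⟨⟨y, hmax.mem_of_isIntegral_s5 hyint⟩, Subtype.ext hy⟩
  · have hf0 : f ≠ 0 := by rintro rfl; simp at hf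
    obtain ⟨x, hx⟩ := IsRealClosed.exists_isRoot_of_odd_natDegree
      (f := f.map (algebraMap F₀ F)) (by rwa [natDegree_map])
    rw [IsRoot, eval_map_algebraMap] at hx
    have hxF₀ := hmax.mem_of_isIntegral_s5 (IsAlgebraic.isIntegral ⟨f, hf0, hx⟩)
    refine ⟨⟨x, hxF₀⟩, (algebraMap F₀ F).injective ?_⟩
    rw [map_zero, ← hx, ← coe_aeval_eq_eval, ← aeval_algebraMap_apply]
    rfl

theorem mem_of_forall_eval₂_residue_ne_zero (a : FiniteElement F)
    (ha : ∀ s : F₀[X], s ≠ 0 → s.eval₂ hmax.1.residue (FiniteResidueField.mk a) ≠ 0) :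
    a.1 ∈ F₀ := by
  refine hmax.mem_of_adjoin_mk_nonneg fun y hy => ?_
  obtain ⟨r, s, rfl⟩ := (mem_adjoin_simple_iff F₀ y).1 hy
  rcases eq_or_ne s 0 with rfl | hs
  · simp
  have hunit := (hom_eval₂ s (hmax.1.toFiniteElement : F₀ →+* FiniteElement F)
    (FiniteResidueField.mk (K := F)).toRingHom a).trans_ne (ha s hs)
  rw [← hmax.1.val_eval₂_toFiniteElement, ← hmax.1.val_eval₂_toFiniteElement, mk_div,
    FiniteResidueField.mk_ne_zero.1 hunit, sub_zero]
  exact (r.eval₂ _ a).2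

theorem exists_residue_eq [IsRealClosed F] {K : Subfield F} (hK : ArchSubfield K) (a : K) :
    ∃ c : F₀, hmax.1.residue c = hK.residue a := by
  have : IsRealClosed F₀ := hmax.isRealClosed
  by_cases halg : ∃ s : F₀[X], s ≠ 0 ∧ s.eval₂ hmax.1.residue (hK.residue a) = 0
  · obtain ⟨s, hs, hsa⟩ := halg
    exact IsRealClosed.mem_range_of_eval₂_eq_zero _ hs hsa
  · push Not at halg
    exact ⟨⟨a, hmax.mem_of_forall_eval₂_residue_ne_zero (hK.toFiniteElement a) halg⟩, rfl⟩

end MaxArchSubfield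

end FiniteElements

/-- A maximal archimedean subfield `F₀` of a real closed linear ordered field `F` is the
greatest archimedean subfield of `F` up to isomorphic embedding of ordered fields:
every archimedean subfield `F₁` embeds into `F₀` by an injective order-preserving
ring homomorphism. -/
theorem maxArchSubfield_greatest (F : Type*) [Field F] [LinearOrder F] [IsStrictOrderedRing F]
    (hF : RealClosedOF F) (F₀ : Subfield F) (hmax : MaxArchSubfield F₀)
    (F₁ : Subfield F) (harch : ArchSubfield F₁) :
    ∃ φ : F₁ →+* F₀, Function.Injective φ ∧ ∀ x y : F₁, x ≤ y ↔ φ x ≤ φ y := by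
  have : IsRealClosed F := hF.isRealClosed
  exact harch.residue.exists_ringHom_le_iff_of_range_subset hmax.1.residue
    (Set.range_subset_iff.2 (hmax.exists_residue_eq harch))
end

section
/- Let K be a class of total computable functions ℕ → ℕ with AC ⊆ K. If the structure (K̃, 0, Q³₊, Q³₋) has a computable presentation, then the set A₀ ∪ (A₂ \ A₁) is Σ⁰₂. -/
/-- The standard numbering of the partial computable functions. -/
def phi (e : ℕ) : ℕ →. ℕ := (Denumerable.ofNat Nat.Partrec.Code e).eval

/-- A set `S ⊆ ℕ` is `Σ⁰₂` if `S = {n | ∃ a, ∀ b, R(n,a,b)}` for a computable relation `R`. -/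
def Sigma02 (S : Set ℕ) : Prop :=
  ∃ R : ℕ × ℕ × ℕ → Bool, Computable R ∧ S = {n : ℕ | ∃ a : ℕ, ∀ b : ℕ, R (n, a, b) = true}

/-- For `f : ℕ → ℕ` (with range in `{0,1,2}`), `f̄ = Σ_{i} (f(i) − 1)/2^(i+1)`. -/
noncomputable def fbar (f : ℕ → ℕ) : ℝ := ∑' i : ℕ, ((f i : ℝ) - 1) / 2 ^ (i + 1)

/-- Almost constant functions. -/
def AlmostConst (f : ℕ → ℕ) : Prop := ∃ c x : ℕ, ∀ y > x, f y = c

/-- `φₙ` is total. -/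
def TotalPhi (n : ℕ) : Prop := ∀ x : ℕ, (phi n x).Dom

/-- The range of `φₙ` is contained in `{0,1,2}`. -/
def RangeSub012 (n : ℕ) : Prop := ∀ x m : ℕ, m ∈ phi n x → m ∈ ({0, 1, 2} : Set ℕ)

/-- The set of reals `K̃ = {m + f̄ | m ∈ ℤ, f ∈ K, range(f) ⊆ {0,1,2}}`. -/
def KtildeR (K : Set (ℕ → ℕ)) : Set ℝ :=
  {x : ℝ | ∃ m : ℤ, ∃ f ∈ K, (∀ i : ℕ, f i ∈ ({0, 1, 2} : Set ℕ)) ∧ x = (m : ℝ) + fbar f}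

def A0 : Set ℕ := {n : ℕ | RangeSub012 n ∧ ¬ TotalPhi n}

def A1 : Set ℕ :=
  {n : ℕ | RangeSub012 n ∧ (¬ TotalPhi n ∨
    ∃ h : TotalPhi n, AlmostConst fun k => (phi n k).get (h k))}

def A2 (K : Set (ℕ → ℕ)) : Set ℕ :=
  {n : ℕ | RangeSub012 n ∧ (¬ TotalPhi n ∨
    ∃ h : TotalPhi n, fbar (fun k => (phi n k).get (h k)) ∈ KtildeR K)}

/-- A computable presentation of the structure `(S, 0, Q³₊, Q³₋)` on a set `S ⊆ ℝ`:
a surjective numbering `μ : ℕ → S` with an index for `0` such that the relations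
`μ(n)+μ(m) ≤ μ(k)` and `μ(n)+μ(m) ≥ μ(k)` are decidable. -/
def CompPres (S : Set ℝ) : Prop :=
  ∃ μ : ℕ → ℝ, (∀ n : ℕ, μ n ∈ S) ∧ (∀ x ∈ S, ∃ n : ℕ, μ n = x) ∧ (∃ e₀ : ℕ, μ e₀ = 0) ∧
    (∃ d : ℕ × ℕ × ℕ → Bool, Computable d ∧
      ∀ n m k : ℕ, (d (n, m, k) = true ↔ μ n + μ m ≤ μ k)) ∧
    (∃ d : ℕ × ℕ × ℕ → Bool, Computable d ∧
      ∀ n m k : ℕ, (d (n, m, k) = true ↔ μ k ≤ μ n + μ m))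

/-!
Write `Sₘ` for the `m`-th partial sum of `f̄` and call `(Sₘ - 2⁻ᵐ, Sₘ + 2⁻ᵐ) \ {Sₘ}` the `m`-th
window of `f`. Since `f̄ = Sₘ + 2⁻ᵐ t` with `t` the value of the tail of `f` at `m`, and a tail
value is `±1` or `0` only for almost constant tails, a sequence `f` of digits in `{0,1,2}` fails
to be almost constant iff `f̄` lies in all its windows; a real lying in all windows of `f` is `f̄`.
Hence `n ∈ A₀ ∪ (A₂ \ A₁)` iff `φₙ` has range in `{0,1,2}` and some `x ∈ K̃` lies in the `m`-th
window of `φₙ` for every `m` up to which `φₙ` converges; for `φₙ` first diverging at `N`, the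
sequence `φₙ(0), …, φₙ(N-1), 2, 1, 1, …` is almost constant, so its value in `K̃` is such an `x`.

Given indices of `2⁻ᵐ` and `Sₘ` in the presentation, `Q³₊` decides whether `μ(k)` lies in the
`m`-th window. Such indices exist because `K̃` contains the values of all almost constant
sequences, and they can be verified with `Q³₊`, `Q³₋` along the chains `2⁻ⁱ = 2⁻ⁱ⁻¹ + 2⁻ⁱ⁻¹` and
`Sᵢ₊₁ = Sᵢ + (f(i) - 1) 2⁻ⁱ⁻¹`. Quantifying universally over a stage of the computation of `φₙ`
and candidate lists of indices gives the form `∃ k ∀ b`.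
-/

section Digits

variable {g : ℕ → ℕ}

def digitTail (g : ℕ → ℕ) (m : ℕ) : ℕ → ℕ := fun i => g (i + m)

noncomputable def partialFbar (g : ℕ → ℕ) (m : ℕ) : ℝ :=
  ∑ i ∈ Finset.range m, ((g i : ℝ) - 1) / 2 ^ (i + 1)

theorem partialFbar_succ (g : ℕ → ℕ) (i : ℕ) :
    partialFbar g (i + 1) = partialFbar g i + ((g i : ℝ) - 1) * ((2 : ℝ) ^ (i + 1))⁻¹ := by
  rw [partialFbar, partialFbar, Finset.sum_range_succ, div_eq_mul_inv]

theorem almostConst_iff : AlmostConst g ↔ ∃ m c, ∀ i, g (i + m) = c := by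
  constructor
  · rintro ⟨c, x, hc⟩
    exact ⟨x + 1, c, fun i => hc _ (by omega)⟩
  · rintro ⟨m, c, hc⟩
    exact ⟨c, m, fun y hy => by simpa [Nat.sub_add_cancel hy.le] using hc (y - m)⟩

theorem div_two_pow_succ (x : ℝ) (i : ℕ) : x / 2 ^ (i + 1) = x / 2 / 2 ^ i := by
  rw [pow_succ', div_div]

theorem summable_fbar (hg : ∀ i, g i ≤ 2) :
    Summable fun i => ((g i : ℝ) - 1) / 2 ^ (i + 1) := by
  refine (summable_geometric_two' 1).of_norm_bounded fun i => ?_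
  have h0 : (0 : ℝ) ≤ g i := Nat.cast_nonneg _
  have h2 : (g i : ℝ) ≤ 2 := by exact_mod_cast hg i
  rw [div_two_pow_succ, Real.norm_eq_abs, abs_div, abs_div, abs_two,
    abs_of_pos (by positivity : (0 : ℝ) < 2 ^ i)]
  gcongr
  exact abs_le.2 ⟨by linarith, by linarith⟩

theorem fbar_const (c : ℕ) : fbar (fun _ => c) = c - 1 := by
  simp_rw [fbar, div_two_pow_succ]
  exact tsum_geometric_two' _

theorem fbar_eq_partialFbar_add (hg : ∀ i, g i ≤ 2) (m : ℕ) :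
    fbar g = partialFbar g m + fbar (digitTail g m) / 2 ^ m := by
  rw [fbar, ← (summable_fbar hg).sum_add_tsum_nat_add m, partialFbar, fbar, ← tsum_div_const]
  congr 1
  refine tsum_congr fun i => ?_
  rw [digitTail, div_div, ← pow_add, add_right_comm]

theorem fbar_digitTail (hg : ∀ i, g i ≤ 2) (m : ℕ) :
    fbar (digitTail g m) = ((g m : ℝ) - 1) / 2 + fbar (digitTail g (m + 1)) / 2 := by
  have htail : digitTail (digitTail g m) 1 = digitTail g (m + 1) :=
    funext fun i => by simp only [digitTail]; ring_nf
  rw [fbar_eq_partialFbar_add (g := digitTail g m) (fun i => hg _) 1, htail]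
  simp [partialFbar, digitTail]

theorem hasSum_one_sub_fbar (hg : ∀ i, g i ≤ 2) :
    HasSum (fun i => (2 - (g i : ℝ)) / 2 ^ (i + 1)) (1 - fbar g) := by
  have h : HasSum (fun i => (((2 : ℕ) : ℝ) - 1) / 2 ^ (i + 1) - ((g i : ℝ) - 1) / 2 ^ (i + 1))
      (fbar (fun _ => 2) - fbar g) :=
    (summable_fbar fun _ => le_rfl).hasSum.sub (summable_fbar hg).hasSum
  rw [fbar_const] at h
  convert h using 1
  · ext i
    push_cast
    ring
  · norm_num

theorem fbar_le_one (hg : ∀ i, g i ≤ 2) : fbar g ≤ 1 := by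
  have := (hasSum_one_sub_fbar hg).nonneg fun i => by
    have : (g i : ℝ) ≤ 2 := by exact_mod_cast hg i
    exact div_nonneg (by linarith) (by positivity)
  linarith

theorem eq_two_of_fbar_eq_one (hg : ∀ i, g i ≤ 2) (h1 : fbar g = 1) (i : ℕ) : g i = 2 := by
  by_contra hi
  have hnonneg : ∀ j, 0 ≤ (2 - (g j : ℝ)) / 2 ^ (j + 1) := fun j => by
    have : (g j : ℝ) ≤ 2 := by exact_mod_cast hg j
    exact div_nonneg (by linarith) (by positivity)
  have hpos : 0 < (2 - (g i : ℝ)) / 2 ^ (i + 1) := by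
    have : (g i : ℝ) < 2 := by exact_mod_cast lt_of_le_of_ne (hg i) hi
    exact div_pos (by linarith) (by positivity)
  have := (hasSum_one_sub_fbar hg).summable.tsum_pos hnonneg i hpos
  rw [(hasSum_one_sub_fbar hg).tsum_eq, h1, sub_self] at this
  exact this.false

theorem fbar_two_sub (hg : ∀ i, g i ≤ 2) : fbar (fun i => 2 - g i) = -fbar g := by
  rw [fbar, fbar, ← tsum_neg]
  refine tsum_congr fun i => ?_
  rw [Nat.cast_sub (hg i)]
  ring

theorem neg_one_le_fbar (hg : ∀ i, g i ≤ 2) : -1 ≤ fbar g := by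
  have := fbar_le_one (g := fun i => 2 - g i) fun i => Nat.sub_le _ _
  rw [fbar_two_sub hg] at this
  linarith

theorem eq_zero_of_fbar_eq_neg_one (hg : ∀ i, g i ≤ 2) (h1 : fbar g = -1) (i : ℕ) : g i = 0 := by
  have := eq_two_of_fbar_eq_one (g := fun i => 2 - g i) (fun i => Nat.sub_le _ _)
    (by rw [fbar_two_sub hg, h1, neg_neg]) i
  have := hg i
  omega

theorem almostConst_of_fbar_eq_zero (hg : ∀ i, g i ≤ 2) (h0 : fbar g = 0) : AlmostConst g := by
  by_contra hnac
  rw [almostConst_iff, not_exists] at hnac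
  have const_tail : ∀ m c, (∀ i, digitTail g m i = c) → False :=
    fun m c hc => hnac m ⟨c, hc⟩
  -- a zero tail value forces the digit `1`: the other digits would leave a constant tail
  have step : ∀ m, fbar (digitTail g m) = 0 → g m = 1 ∧ fbar (digitTail g (m + 1)) = 0 := by
    intro m hm
    have hsplit := fbar_digitTail hg m
    have : g m ≤ 2 := hg m
    interval_cases hgm : g m
    · refine (const_tail (m + 1) 2 (eq_two_of_fbar_eq_one (fun i => hg _) ?_)).elim
      push_cast at hsplit
      linarith
    · exact ⟨rfl, by push_cast at hsplit; linarith⟩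
    · refine (const_tail (m + 1) 0 (eq_zero_of_fbar_eq_neg_one (fun i => hg _) ?_)).elim
      push_cast at hsplit
      linarith
  have hzero : ∀ m, fbar (digitTail g m) = 0 := fun m => Nat.rec h0 (fun m hm => (step m hm).2) m
  exact const_tail 0 1 fun i => (step i (hzero i)).1

theorem fbar_mem_puncturedBall_of_not_almostConst (hg : ∀ i, g i ≤ 2) (hnac : ¬ AlmostConst g) :
    fbar g ∈ Metric.ball 0 1 \ {0} := by
  have hne1 : fbar g ≠ 1 := fun h1 =>
    hnac (almostConst_iff.2 ⟨0, 2, fun i => eq_two_of_fbar_eq_one hg h1 _⟩)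
  have hne2 : fbar g ≠ -1 := fun h1 =>
    hnac (almostConst_iff.2 ⟨0, 0, fun i => eq_zero_of_fbar_eq_neg_one hg h1 _⟩)
  refine ⟨?_, fun h0 => hnac (almostConst_of_fbar_eq_zero hg h0)⟩
  rw [mem_ball_zero_iff, Real.norm_eq_abs, abs_lt]
  exact ⟨lt_of_le_of_ne (neg_one_le_fbar hg) hne2.symm, lt_of_le_of_ne (fbar_le_one hg) hne1⟩

theorem fbar_ite_lt (hg : ∀ i, g i ≤ 2) (m : ℕ) {c : ℕ} (hc : c ≤ 2) :
    fbar (fun i => if i < m then g i else c) = partialFbar g m + ((c : ℝ) - 1) / 2 ^ m := by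
  have hle : ∀ i, (if i < m then g i else c) ≤ 2 := fun i => by split_ifs; exacts [hg i, hc]
  have htail : digitTail (fun i => if i < m then g i else c) m = fun _ => c :=
    funext fun i => if_neg (by omega)
  rw [fbar_eq_partialFbar_add hle m, htail, fbar_const]
  congr 1
  exact Finset.sum_congr rfl fun i hi => by simp only [if_pos (Finset.mem_range.1 hi)]

theorem almostConst_ite_lt (g : ℕ → ℕ) (m c : ℕ) :
    AlmostConst fun i => if i < m then g i else c :=
  almostConst_iff.2 ⟨m, c, fun i => if_neg (by omega)⟩

end Digits

section Window

variable {g h : ℕ → ℕ}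

def dyadicWindow (g : ℕ → ℕ) (m : ℕ) : Set ℝ :=
  Metric.ball (partialFbar g m) (2 ^ m)⁻¹ \ {partialFbar g m}

theorem dyadicWindow_congr {m : ℕ} (hgh : ∀ i < m, g i = h i) :
    dyadicWindow g m = dyadicWindow h m := by
  have : partialFbar g m = partialFbar h m :=
    Finset.sum_congr rfl fun i hi => by rw [hgh i (Finset.mem_range.1 hi)]
  rw [dyadicWindow, dyadicWindow, this]

theorem fbar_mem_dyadicWindow_iff (hg : ∀ i, g i ≤ 2) (m : ℕ) :
    fbar g ∈ dyadicWindow g m ↔ fbar (digitTail g m) ∈ Metric.ball 0 1 \ {0} := by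
  have hpos : (0 : ℝ) < 2 ^ m := by positivity
  simp only [dyadicWindow, Set.mem_sdiff, Metric.mem_ball, Set.mem_singleton_iff, Real.dist_eq,
    fbar_eq_partialFbar_add hg m, add_sub_cancel_left, add_eq_left, sub_zero, abs_div,
    abs_of_pos hpos, div_eq_zero_iff, hpos.ne', or_false]
  rw [div_lt_iff₀ hpos, inv_mul_cancel₀ hpos.ne']

theorem digit_add_mem_puncturedBall {d : ℕ} (hd : d ≤ 2) {t : ℝ}
    (ht : t ∈ Metric.ball (0 : ℝ) 1 \ {0}) :
    ((d : ℝ) - 1) / 2 + t / 2 ∈ Metric.ball (0 : ℝ) 1 \ {0} := by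
  simp only [Set.mem_sdiff, mem_ball_zero_iff, Real.norm_eq_abs, abs_lt,
    Set.mem_singleton_iff] at ht ⊢
  obtain ⟨⟨h1, h2⟩, h3⟩ := ht
  interval_cases d
  · refine ⟨⟨?_, ?_⟩, ?_⟩ <;> norm_num <;> [linarith; linarith; (intro; linarith)]
  · norm_num
    exact ⟨⟨by linarith, by linarith⟩, h3⟩
  · refine ⟨⟨?_, ?_⟩, ?_⟩ <;> norm_num <;> [linarith; linarith; (intro; linarith)]

theorem forall_fbar_mem_dyadicWindow_iff (hg : ∀ i, g i ≤ 2) :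
    (∀ m, fbar g ∈ dyadicWindow g m) ↔ ¬ AlmostConst g := by
  constructor
  · intro hw hac
    obtain ⟨m, c, hc⟩ := almostConst_iff.1 hac
    have hmem := (fbar_mem_dyadicWindow_iff hg m).1 (hw m)
    have hc2 : c ≤ 2 := hc 0 ▸ hg _
    rw [show digitTail g m = fun _ => c from funext hc, fbar_const] at hmem
    interval_cases c <;> norm_num at hmem
  · intro hnac m
    refine (fbar_mem_dyadicWindow_iff hg m).2
      (fbar_mem_puncturedBall_of_not_almostConst (fun i => hg _) fun hac => hnac ?_)
    obtain ⟨m', c, hc⟩ := almostConst_iff.1 hac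
    exact almostConst_iff.2 ⟨m' + m, c, fun i => by rw [← add_assoc]; exact hc i⟩

theorem eq_fbar_of_forall_mem_dyadicWindow (hg : ∀ i, g i ≤ 2) {x : ℝ}
    (hx : ∀ m, x ∈ dyadicWindow g m) : x = fbar g := by
  have hradius : Filter.Tendsto (fun m : ℕ => ((2 : ℝ) ^ m)⁻¹) Filter.atTop (nhds 0) :=
    tendsto_inv_atTop_zero.comp (tendsto_pow_atTop_atTop_of_one_lt one_lt_two)
  have hx' : Filter.Tendsto (partialFbar g) Filter.atTop (nhds x) :=
    tendsto_iff_dist_tendsto_zero.2 <| squeeze_zero (fun _ => dist_nonneg)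
      (fun m => by rw [dist_comm]; exact (hx m).1.le) hradius
  exact tendsto_nhds_unique hx' (summable_fbar hg).hasSum.tendsto_sum_nat

/-- The tail at `N` has value `1/2`, and prepending a digit keeps a tail value in
`(-1, 1) \ {0}`. -/
theorem fbar_mem_dyadicWindow_of_le (hg : ∀ i, g i ≤ 2) {N m : ℕ} (hm : m ≤ N) :
    fbar (fun i => if i < N then g i else if i = N then 2 else 1) ∈ dyadicWindow g m := by
  set w : ℕ → ℕ := fun i => if i < N then g i else if i = N then 2 else 1 with w_def
  have hw : ∀ i, w i ≤ 2 := fun i => by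
    simp only [w_def]
    split_ifs
    exacts [hg i, le_rfl, one_le_two]
  rw [dyadicWindow_congr (h := w) fun i hi => by simp [w_def, show i < N by omega],
    fbar_mem_dyadicWindow_iff hw]
  refine Nat.decreasingInduction (fun k hk ih => ?_) ?_ hm
  · rw [fbar_digitTail hw]
    exact digit_add_mem_puncturedBall (hw k) ih
  · have hone : digitTail w (N + 1) = fun _ => 1 :=
      funext fun i => by
        simp only [digitTail, w_def]
        rw [if_neg (by omega), if_neg (by omega)]
    rw [fbar_digitTail hw, hone, fbar_const]
    norm_num [w_def]

end Window

section Ktilde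

variable {K : Set (ℕ → ℕ)}

theorem fbar_mem_KtildeR (hAC : ∀ f : ℕ → ℕ, AlmostConst f → f ∈ K) {g : ℕ → ℕ}
    (hg : ∀ i, g i ≤ 2) (hac : AlmostConst g) : fbar g ∈ KtildeR K :=
  ⟨0, g, hAC g hac, fun i => by
    have := hg i
    simp only [Set.mem_insert_iff, Set.mem_singleton_iff]
    omega, by simp⟩

theorem one_mem_KtildeR (hAC : ∀ f : ℕ → ℕ, AlmostConst f → f ∈ K) : (1 : ℝ) ∈ KtildeR K := by
  have := fbar_mem_KtildeR hAC (g := fun _ => 2) (fun _ => le_rfl)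
    (almostConst_iff.2 ⟨0, 2, fun _ => rfl⟩)
  rwa [fbar_const, Nat.cast_ofNat, show (2 : ℝ) - 1 = 1 by norm_num] at this

theorem partialFbar_mem_KtildeR (hAC : ∀ f : ℕ → ℕ, AlmostConst f → f ∈ K) {g : ℕ → ℕ}
    (hg : ∀ i, g i ≤ 2) (m : ℕ) : partialFbar g m ∈ KtildeR K := by
  have := fbar_mem_KtildeR hAC (fun i => by split_ifs; exacts [hg i, one_le_two])
    (almostConst_ite_lt g m 1)
  rwa [fbar_ite_lt hg m one_le_two, Nat.cast_one, sub_self, zero_div, add_zero] at this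

theorem inv_two_pow_mem_KtildeR (hAC : ∀ f : ℕ → ℕ, AlmostConst f → f ∈ K) (m : ℕ) :
    ((2 : ℝ) ^ m)⁻¹ ∈ KtildeR K := by
  have := fbar_mem_KtildeR hAC (fun i => by split_ifs; exacts [one_le_two, le_rfl])
    (almostConst_ite_lt (fun _ => 1) m 2)
  norm_num [fbar_ite_lt (fun _ => one_le_two) m le_rfl, partialFbar] at this
  exact this

theorem exists_mem_KtildeR_forall_le_mem_dyadicWindow
    (hAC : ∀ f : ℕ → ℕ, AlmostConst f → f ∈ K) {g : ℕ → ℕ} (hg : ∀ i, g i ≤ 2) (N : ℕ) :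
    ∃ x ∈ KtildeR K, ∀ m ≤ N, x ∈ dyadicWindow g m := by
  refine ⟨_, fbar_mem_KtildeR hAC ?_ ?_, fun m hm => fbar_mem_dyadicWindow_of_le hg hm⟩
  · intro i
    split_ifs
    exacts [hg i, le_rfl, one_le_two]
  · exact almostConst_iff.2 ⟨N + 1, 1, fun i => by rw [if_neg (by omega), if_neg (by omega)]⟩

end Ktilde

def phiStage (s n i : ℕ) : Option ℕ :=
  Nat.Partrec.Code.evaln s (Denumerable.ofNat Nat.Partrec.Code n) i

theorem mem_phi_iff_exists_phiStage {n i d : ℕ} : d ∈ phi n i ↔ ∃ s, phiStage s n i = some d :=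
  Nat.Partrec.Code.evaln_complete

/-- The digits of `φₙ`, with the junk digit `1` where `φₙ` diverges. -/
noncomputable def phiDigits (n i : ℕ) : ℕ :=
  open Classical in if h : (phi n i).Dom then (phi n i).get h else 1

theorem phiDigits_eq_of_mem {n i d : ℕ} (h : d ∈ phi n i) : phiDigits n i = d := by
  rw [phiDigits, dif_pos h.fst]
  exact Part.get_eq_of_mem h _

theorem phiDigits_mem {n i : ℕ} (h : (phi n i).Dom) : phiDigits n i ∈ phi n i := by
  rw [phiDigits_eq_of_mem (Part.get_mem h)]
  exact Part.get_mem h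

theorem phiDigits_eq_of_not_dom {n i : ℕ} (h : ¬ (phi n i).Dom) : phiDigits n i = 1 := by
  rw [phiDigits, dif_neg h]

theorem phiDigits_le_two {n : ℕ} (hr : RangeSub012 n) (i : ℕ) : phiDigits n i ≤ 2 := by
  by_cases h : (phi n i).Dom
  · have := hr i _ (Part.get_mem h)
    simp only [Set.mem_insert_iff, Set.mem_singleton_iff] at this
    rw [phiDigits_eq_of_mem (Part.get_mem h)]
    omega
  · rw [phiDigits_eq_of_not_dom h]
    exact one_le_two

theorem phiDigits_eq_get {n : ℕ} (hT : TotalPhi n) :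
    (fun k => (phi n k).get (hT k)) = phiDigits n :=
  funext fun _ => (phiDigits_eq_of_mem (Part.get_mem _)).symm

theorem exists_phiStage_forall_lt {n m : ℕ} (h : ∀ i < m, (phi n i).Dom) :
    ∃ s, ∀ i < m, phiStage s n i = some (phiDigits n i) := by
  induction m with
  | zero => exact ⟨0, fun i hi => absurd hi (Nat.not_lt_zero i)⟩
  | succ m ih =>
    obtain ⟨s, hs⟩ := ih fun i hi => h i (by omega)
    obtain ⟨s', hs'⟩ := mem_phi_iff_exists_phiStage.1 (phiDigits_mem (h m (by omega)))
    refine ⟨max s s', fun i hi => ?_⟩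
    rcases Nat.lt_succ_iff_lt_or_eq.1 hi with hi | rfl
    · exact Nat.Partrec.Code.evaln_mono (le_max_left s s') (hs i hi)
    · exact Nat.Partrec.Code.evaln_mono (le_max_right s s') hs'

theorem rangeSub012_iff_forall_phiStage {n : ℕ} :
    RangeSub012 n ↔ ∀ s i, (phiStage s n i).all (fun d => decide (d ≤ 2)) = true := by
  simp only [RangeSub012, mem_phi_iff_exists_phiStage, Option.all_eq_true, decide_eq_true_eq,
    Set.mem_insert_iff, Set.mem_singleton_iff]
  constructor
  · intro h s i d hd
    have := h i d ⟨s, hd⟩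
    omega
  · rintro h i d ⟨s, hd⟩
    have := h s i d hd
    omega

theorem mem_A0_union_iff {K : Set (ℕ → ℕ)} (hAC : ∀ f : ℕ → ℕ, AlmostConst f → f ∈ K) (n : ℕ) :
    n ∈ A0 ∪ (A2 K \ A1) ↔ RangeSub012 n ∧
      ∃ x ∈ KtildeR K, ∀ m, (∀ i < m, (phi n i).Dom) → x ∈ dyadicWindow (phiDigits n) m := by
  classical
  constructor
  · rintro (⟨hr, hT⟩ | ⟨⟨hr, hT | ⟨hT, hK⟩⟩, hA1⟩)
    · have hdiv : ∃ i, ¬ (phi n i).Dom := not_forall.1 hT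
      obtain ⟨x, hxK, hx⟩ :=
        exists_mem_KtildeR_forall_le_mem_dyadicWindow hAC (phiDigits_le_two hr) (Nat.find hdiv)
      refine ⟨hr, x, hxK, fun m hm => hx m ?_⟩
      by_contra hlt
      exact Nat.find_spec hdiv (hm _ (by omega))
    · exact absurd ⟨hr, Or.inl hT⟩ hA1
    · rw [phiDigits_eq_get hT] at hK
      have hnac : ¬ AlmostConst (phiDigits n) := fun hac =>
        hA1 ⟨hr, Or.inr ⟨hT, by rwa [phiDigits_eq_get hT]⟩⟩
      exact ⟨hr, _, hK, fun m _ =>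
        (forall_fbar_mem_dyadicWindow_iff (phiDigits_le_two hr)).2 hnac m⟩
  · rintro ⟨hr, x, hxK, hx⟩
    by_cases hT : TotalPhi n
    · have hw : ∀ m, x ∈ dyadicWindow (phiDigits n) m := fun m => hx m fun i _ => hT i
      have hxeq := eq_fbar_of_forall_mem_dyadicWindow (phiDigits_le_two hr) hw
      have hnac := (forall_fbar_mem_dyadicWindow_iff (phiDigits_le_two hr)).1 (hxeq ▸ hw)
      refine Or.inr ⟨⟨hr, Or.inr ⟨hT, by rwa [phiDigits_eq_get hT, ← hxeq]⟩⟩, ?_⟩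
      rintro ⟨-, hT' | ⟨hT', hac⟩⟩
      · exact hT' hT
      · exact hnac (by rwa [phiDigits_eq_get hT'] at hac)
    · exact Or.inl ⟨hr, hT⟩

theorem Computable.decide_forall_lt {α : Type*} [Primcodable α] {f : α → ℕ} {p : α → ℕ → Bool}
    (hf : Computable f) (hp : Computable₂ p) :
    Computable fun a => decide (∀ i < f a, p a i = true) := by
  have hrec : Computable fun a => Nat.rec (motive := fun _ => Bool) true
      (fun i acc => acc && p a i) (f a) :=
    Computable.nat_rec hf (Computable.const true)
      (Primrec.and.to_comp.comp (Computable.snd.comp Computable.snd)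
        (hp.comp Computable.fst (Computable.fst.comp Computable.snd))).to₂
  refine hrec.of_eq fun a => ?_
  induction f a with
  | zero => simp
  | succ m ih =>
    change (Nat.rec (motive := fun _ => Bool) true (fun i acc => acc && p a i) m && p a m) = _
    rw [ih, Bool.eq_iff_iff, Bool.and_eq_true, decide_eq_true_iff, decide_eq_true_iff,
      Nat.forall_lt_succ_right]

theorem primrec_phiStage : Primrec fun x : ℕ × ℕ × ℕ => phiStage x.1 x.2.1 x.2.2 :=
  Nat.Partrec.Code.primrec_evaln.comp <|
    (Primrec.fst.pair ((Primrec.ofNat _).comp (Primrec.fst.comp Primrec.snd))).pair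
      (Primrec.snd.comp Primrec.snd)

/-- A numbering `μ` of reals with the relations `Q³₊` (`sumLe`) and `Q³₋` (`sumGe`) and names
of `0` and `1`. -/
structure AdditiveNumbering where
  μ : ℕ → ℝ
  sumLe : ℕ × ℕ × ℕ → Bool
  sumGe : ℕ × ℕ × ℕ → Bool
  sumLe_iff : ∀ a b c, sumLe (a, b, c) = true ↔ μ a + μ b ≤ μ c
  sumGe_iff : ∀ a b c, sumGe (a, b, c) = true ↔ μ c ≤ μ a + μ b
  zero : ℕ
  μ_zero : μ zero = 0
  one : ℕ
  μ_one : μ one = 1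

namespace AdditiveNumbering

variable (P : AdditiveNumbering) {α : Type*} [Primcodable α]

def sumEq (t : ℕ × ℕ × ℕ) : Bool := P.sumLe t && P.sumGe t

theorem sumEq_iff (a b c : ℕ) : P.sumEq (a, b, c) = true ↔ P.μ a + P.μ b = P.μ c := by
  rw [sumEq, Bool.and_eq_true, P.sumLe_iff, P.sumGe_iff, le_antisymm_iff]

def stepTriple (d w h w' : ℕ) : ℕ × ℕ × ℕ :=
  if d = 0 then (w', h, w) else if d = 1 then (w, P.zero, w') else (w, h, w')

def digitStep (d w h w' : ℕ) : Bool := decide (d ≤ 2) && P.sumEq (P.stepTriple d w h w')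

theorem digitStep_iff (d w h w' : ℕ) :
    P.digitStep d w h w' = true ↔ d ≤ 2 ∧ P.μ w' = P.μ w + ((d : ℝ) - 1) * P.μ h := by
  rw [digitStep, Bool.and_eq_true, decide_eq_true_iff]
  refine and_congr_right fun hd => ?_
  interval_cases d
  · rw [stepTriple, if_pos rfl, sumEq_iff]
    constructor <;> intro <;> push_cast at * <;> linarith
  · rw [stepTriple, if_neg one_ne_zero, if_pos rfl, sumEq_iff, P.μ_zero]
    norm_num [eq_comm]
  · rw [stepTriple, if_neg two_ne_zero, if_neg (by norm_num), sumEq_iff]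
    norm_num [eq_comm]

def inWindow (k w h : ℕ) : Bool :=
  !P.sumLe (w, h, k) && !P.sumLe (k, h, w) && !(P.sumLe (k, P.zero, w) && P.sumLe (w, P.zero, k))

theorem inWindow_iff (k w h : ℕ) :
    P.inWindow k w h = true ↔ P.μ k ∈ Metric.ball (P.μ w) (P.μ h) \ {P.μ w} := by
  simp only [inWindow, Bool.and_eq_true, Bool.not_eq_true', ← Bool.not_eq_true, P.sumLe_iff,
    P.μ_zero, add_zero, Set.mem_sdiff, Metric.mem_ball, Real.dist_eq, abs_lt,
    Set.mem_singleton_iff, not_le]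
  constructor
  · rintro ⟨⟨h1, h2⟩, h3⟩
    exact ⟨⟨by linarith, by linarith⟩, fun he => h3 ⟨he.le, he.ge⟩⟩
  · rintro ⟨⟨h1, h2⟩, h3⟩
    exact ⟨⟨by linarith, by linarith⟩, fun ⟨hkw, hwk⟩ => h3 (le_antisymm hkw hwk)⟩

def powIdx (vs : List ℕ) (i : ℕ) : ℕ := (P.one :: vs).getD i 0

def sumIdx (ws : List ℕ) (i : ℕ) : ℕ := (P.zero :: ws).getD i 0

def certStep (n s : ℕ) (vs ws : List ℕ) (i : ℕ) : Bool :=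
  (phiStage s n i).any fun d =>
    P.sumEq (P.powIdx vs (i + 1), P.powIdx vs (i + 1), P.powIdx vs i) &&
      P.digitStep d (P.sumIdx ws i) (P.powIdx vs (i + 1)) (P.sumIdx ws (i + 1))

/-- The lists `vs`, `ws` certify, through the relations of the numbering alone, that
`powIdx vs i` names `2⁻ⁱ` and `sumIdx ws i` names `partialFbar (phiDigits n) i` for `i ≤ m`,
the digits being read off the computation of `φₙ` up to stage `s`. -/
def certified (n s m : ℕ) (vs ws : List ℕ) : Bool :=
  decide (∀ i < m, P.certStep n s vs ws i = true)

theorem certStep_iff {n s i : ℕ} {vs ws : List ℕ} :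
    P.certStep n s vs ws i = true ↔ ∃ d, phiStage s n i = some d ∧
      P.μ (P.powIdx vs (i + 1)) + P.μ (P.powIdx vs (i + 1)) = P.μ (P.powIdx vs i) ∧ d ≤ 2 ∧
      P.μ (P.sumIdx ws (i + 1)) =
        P.μ (P.sumIdx ws i) + ((d : ℝ) - 1) * P.μ (P.powIdx vs (i + 1)) := by
  simp only [certStep, Option.any_eq_true, Bool.and_eq_true, sumEq_iff, digitStep_iff]

theorem certified_sound {n s m : ℕ} {vs ws : List ℕ} (hc : P.certified n s m vs ws = true) :
    (∀ i < m, (phi n i).Dom) ∧ ∀ i ≤ m, P.μ (P.powIdx vs i) = ((2 : ℝ) ^ i)⁻¹ ∧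
      P.μ (P.sumIdx ws i) = partialFbar (phiDigits n) i := by
  rw [certified, decide_eq_true_iff] at hc
  have hstep := fun i hi => P.certStep_iff.1 (hc i hi)
  refine ⟨fun i hi => ?_, fun i hi => ?_⟩
  · obtain ⟨d, hd, -⟩ := hstep i hi
    exact Part.dom_iff_mem.2 ⟨d, mem_phi_iff_exists_phiStage.2 ⟨s, hd⟩⟩
  induction i with
  | zero => simp [powIdx, sumIdx, P.μ_one, P.μ_zero, partialFbar]
  | succ i ih =>
    obtain ⟨d, hd, hhalf, -, hsum⟩ := hstep i hi
    obtain ⟨ihp, ihs⟩ := ih (by omega)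
    have hdig : phiDigits n i = d := phiDigits_eq_of_mem (mem_phi_iff_exists_phiStage.2 ⟨s, hd⟩)
    have hp : P.μ (P.powIdx vs (i + 1)) = ((2 : ℝ) ^ (i + 1))⁻¹ := by
      rw [pow_succ, mul_inv]
      linarith
    rw [hsum, ihs, hp, partialFbar_succ, hdig]
    exact ⟨rfl, rfl⟩

theorem exists_certified {n s m : ℕ} (hV : ∀ i, ∃ j, P.μ j = ((2 : ℝ) ^ i)⁻¹)
    (hW : ∀ i, ∃ j, P.μ j = partialFbar (phiDigits n) i)
    (hs : ∀ i < m, phiStage s n i = some (phiDigits n i)) (hle : ∀ i < m, phiDigits n i ≤ 2) :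
    ∃ vs ws, P.certified n s m vs ws = true := by
  choose V hV using hV
  choose W hW using hW
  set vs := (List.range m).map fun j => V (j + 1)
  set ws := (List.range m).map fun j => W (j + 1)
  have hpow : ∀ i ≤ m, P.μ (P.powIdx vs i) = ((2 : ℝ) ^ i)⁻¹ := by
    rintro (_ | i) hi
    · simp [powIdx, P.μ_one]
    · simp [powIdx, vs, show i < m by omega, hV]
  have hsum : ∀ i ≤ m, P.μ (P.sumIdx ws i) = partialFbar (phiDigits n) i := by
    rintro (_ | i) hi
    · simp [sumIdx, P.μ_zero, partialFbar]
    · simp [sumIdx, ws, show i < m by omega, hW]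
  refine ⟨vs, ws, decide_eq_true_iff.2 fun i hi => P.certStep_iff.2 ⟨_, hs i hi, ?_, hle i hi, ?_⟩⟩
  · rw [hpow i hi.le, hpow (i + 1) hi, pow_succ, mul_inv]
    ring
  · rw [hsum i hi.le, hsum (i + 1) hi, hpow (i + 1) hi, partialFbar_succ]

/-- The matrix of the `Σ⁰₂` definition, at `b = (s, m, vs, ws)`. -/
def matrix (n k : ℕ) (b : ℕ × ℕ × List ℕ × List ℕ) : Bool :=
  (phiStage b.1 n b.2.1).all (fun d => decide (d ≤ 2)) &&
    (!P.certified n b.1 b.2.1 b.2.2.1 b.2.2.2 ||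
      P.inWindow k (P.sumIdx b.2.2.2 b.2.1) (P.powIdx b.2.2.1 b.2.1))

theorem exists_forall_matrix_iff (hV : ∀ i, ∃ j, P.μ j = ((2 : ℝ) ^ i)⁻¹)
    (hW : ∀ g : ℕ → ℕ, (∀ i, g i ≤ 2) → ∀ i, ∃ j, P.μ j = partialFbar g i) (n : ℕ) :
    (∃ k, ∀ b, P.matrix n k b = true) ↔ RangeSub012 n ∧
      ∃ k, ∀ m, (∀ i < m, (phi n i).Dom) → P.μ k ∈ dyadicWindow (phiDigits n) m := by
  have hwin : ∀ {k s m vs ws}, P.certified n s m vs ws = true →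
      (P.inWindow k (P.sumIdx ws m) (P.powIdx vs m) = true ↔
        P.μ k ∈ dyadicWindow (phiDigits n) m) := fun hc => by
    obtain ⟨hp, hs⟩ := (P.certified_sound hc).2 _ le_rfl
    rw [inWindow_iff, hp, hs, dyadicWindow]
  simp only [matrix, Bool.and_eq_true, Prod.forall]
  constructor
  · rintro ⟨k, hk⟩
    have hr : RangeSub012 n := rangeSub012_iff_forall_phiStage.2 fun s i => (hk s i [] []).1
    refine ⟨hr, k, fun m hm => ?_⟩
    obtain ⟨s, hs⟩ := exists_phiStage_forall_lt hm
    obtain ⟨vs, ws, hc⟩ := P.exists_certified hV (hW _ (phiDigits_le_two hr)) hs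
      fun i _ => phiDigits_le_two hr i
    have := (hk s m vs ws).2
    rw [hc, Bool.not_true, Bool.false_or] at this
    exact (hwin hc).1 this
  · rintro ⟨hr, k, hk⟩
    refine ⟨k, fun s m vs ws => ⟨rangeSub012_iff_forall_phiStage.1 hr s m, ?_⟩⟩
    cases hc : P.certified n s m vs ws
    · rfl
    · rw [Bool.not_true, Bool.false_or]
      exact (hwin hc).2 (hk m (P.certified_sound hc).1)

theorem computable_sumEq (hle : Computable P.sumLe) (hge : Computable P.sumGe) :
    Computable P.sumEq := Primrec.and.to_comp.comp hle hge

theorem computable_digitStep (hle : Computable P.sumLe) (hge : Computable P.sumGe)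
    {d w h w' : α → ℕ} (hd : Primrec d) (hw : Primrec w)
    (hh : Primrec h) (hw' : Primrec w') :
    Computable fun a => P.digitStep (d a) (w a) (h a) (w' a) := by
  have htriple : Primrec fun a => P.stepTriple (d a) (w a) (h a) (w' a) :=
    Primrec.ite (Primrec.eq.comp hd (Primrec.const 0)) (hw'.pair (hh.pair hw))
      (Primrec.ite (Primrec.eq.comp hd (Primrec.const 1)) (hw.pair ((Primrec.const _).pair hw'))
        (hw.pair (hh.pair hw')))
  exact Primrec.and.to_comp.comp (Primrec.nat_le.comp hd (Primrec.const 2)).decide.to_comp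
    ((P.computable_sumEq hle hge).comp htriple.to_comp)

theorem computable_inWindow (hle : Computable P.sumLe) {k w h : α → ℕ} (hk : Primrec k)
    (hw : Primrec w) (hh : Primrec h) :
    Computable fun a => P.inWindow (k a) (w a) (h a) := by
  have hz : Primrec fun _ : α => P.zero := Primrec.const _
  have hnot := Primrec.not.to_comp
  have hand := Primrec.and.to_comp
  exact hand.comp (hand.comp (hnot.comp (hle.comp (hw.pair (hh.pair hk)).to_comp))
      (hnot.comp (hle.comp (hk.pair (hh.pair hw)).to_comp)))
    (hnot.comp (hand.comp (hle.comp (hk.pair (hz.pair hw)).to_comp)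
      (hle.comp (hw.pair (hz.pair hk)).to_comp)))

theorem primrec_powIdx : Primrec₂ P.powIdx :=
  (Primrec.list_getD 0).comp (Primrec.list_cons.comp (Primrec.const _) Primrec.fst) Primrec.snd

theorem primrec_sumIdx : Primrec₂ P.sumIdx :=
  (Primrec.list_getD 0).comp (Primrec.list_cons.comp (Primrec.const _) Primrec.fst) Primrec.snd

theorem computable_certStep (hle : Computable P.sumLe) (hge : Computable P.sumGe)
    {n s i : α → ℕ} {vs ws : α → List ℕ} (hn : Primrec n) (hs : Primrec s) (hvs : Primrec vs)
    (hws : Primrec ws) (hi : Primrec i) :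
    Computable fun a => P.certStep (n a) (s a) (vs a) (ws a) (i a) := by
  have hstage : Primrec fun a => phiStage (s a) (n a) (i a) :=
    primrec_phiStage.comp (hs.pair (hn.pair hi))
  have hvs' := hvs.comp (Primrec.fst (α := α) (β := ℕ))
  have hws' := hws.comp (Primrec.fst (α := α) (β := ℕ))
  have hi' := hi.comp (Primrec.fst (α := α) (β := ℕ))
  have hi1 := Primrec.succ.comp hi'
  have hpow := fun {f : α × ℕ → ℕ} (hf : Primrec f) => (P.primrec_powIdx).comp hvs' hf
  have hsum := fun {f : α × ℕ → ℕ} (hf : Primrec f) => (P.primrec_sumIdx).comp hws' hf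
  have hstep : Computable₂ fun a d => P.sumEq (P.powIdx (vs a) (i a + 1), P.powIdx (vs a) (i a + 1),
      P.powIdx (vs a) (i a)) && P.digitStep d (P.sumIdx (ws a) (i a))
        (P.powIdx (vs a) (i a + 1)) (P.sumIdx (ws a) (i a + 1)) :=
    Primrec.and.to_comp.comp
      ((P.computable_sumEq hle hge).comp ((hpow hi1).pair ((hpow hi1).pair (hpow hi'))).to_comp)
      (P.computable_digitStep hle hge Primrec.snd (hsum hi') (hpow hi1) (hsum hi1))
  refine (Computable.option_casesOn hstage.to_comp (Computable.const false) hstep).of_eq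
    fun a => ?_
  simp only [certStep]
  cases phiStage (s a) (n a) (i a) <;> rfl

theorem computable_matrix (hle : Computable P.sumLe) (hge : Computable P.sumGe) :
    Computable fun x : ℕ × ℕ × ℕ × ℕ × List ℕ × List ℕ => P.matrix x.1 x.2.1 x.2.2 := by
  have hn : Primrec fun x : ℕ × ℕ × ℕ × ℕ × List ℕ × List ℕ => x.1 := Primrec.fst
  have hk : Primrec fun x : ℕ × ℕ × ℕ × ℕ × List ℕ × List ℕ => x.2.1 :=
    Primrec.fst.comp Primrec.snd
  have hs : Primrec fun x : ℕ × ℕ × ℕ × ℕ × List ℕ × List ℕ => x.2.2.1 :=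
    Primrec.fst.comp (Primrec.snd.comp Primrec.snd)
  have hm : Primrec fun x : ℕ × ℕ × ℕ × ℕ × List ℕ × List ℕ => x.2.2.2.1 :=
    Primrec.fst.comp (Primrec.snd.comp (Primrec.snd.comp Primrec.snd))
  have hvs : Primrec fun x : ℕ × ℕ × ℕ × ℕ × List ℕ × List ℕ => x.2.2.2.2.1 :=
    Primrec.fst.comp (Primrec.snd.comp (Primrec.snd.comp (Primrec.snd.comp Primrec.snd)))
  have hws : Primrec fun x : ℕ × ℕ × ℕ × ℕ × List ℕ × List ℕ => x.2.2.2.2.2 :=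
    Primrec.snd.comp (Primrec.snd.comp (Primrec.snd.comp (Primrec.snd.comp Primrec.snd)))
  have hrange : Primrec fun x : ℕ × ℕ × ℕ × ℕ × List ℕ × List ℕ =>
      (phiStage x.2.2.1 x.1 x.2.2.2.1).all fun d => decide (d ≤ 2) :=
    (Primrec.option_casesOn (primrec_phiStage.comp (hs.pair (hn.pair hm))) (Primrec.const true)
      (Primrec.nat_le.comp Primrec.snd (Primrec.const 2)).decide.to₂).of_eq
      fun x => by cases phiStage x.2.2.1 x.1 x.2.2.2.1 <;> rfl
  have hcert : Computable fun x : ℕ × ℕ × ℕ × ℕ × List ℕ × List ℕ =>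
      P.certified x.1 x.2.2.1 x.2.2.2.1 x.2.2.2.2.1 x.2.2.2.2.2 :=
    Computable.decide_forall_lt hm.to_comp
      (P.computable_certStep hle hge (hn.comp Primrec.fst) (hs.comp Primrec.fst)
        (hvs.comp Primrec.fst) (hws.comp Primrec.fst) Primrec.snd).to₂
  exact Primrec.and.to_comp.comp hrange.to_comp
    (Primrec.or.to_comp.comp (Primrec.not.to_comp.comp hcert)
      (P.computable_inWindow hle hk (P.primrec_sumIdx.comp hws hm) (P.primrec_powIdx.comp hvs hm)))

end AdditiveNumbering

theorem sigma02_of_computable {α β : Type*} [Denumerable α] [Denumerable β]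
    {R : ℕ → α → β → Bool} (hR : Computable fun x : ℕ × α × β => R x.1 x.2.1 x.2.2) :
    Sigma02 {n | ∃ a, ∀ b, R n a b = true} := by
  have hdecode : Computable fun x : ℕ × ℕ × ℕ =>
      (x.1, Denumerable.ofNat α x.2.1, Denumerable.ofNat β x.2.2) :=
    Computable.fst.pair (((Computable.ofNat α).comp (Computable.fst.comp Computable.snd)).pair
      ((Computable.ofNat β).comp (Computable.snd.comp Computable.snd)))
  refine ⟨_, hR.comp hdecode, Set.ext fun n => ⟨fun ⟨a, ha⟩ => ⟨Encodable.encode a, fun b => ?_⟩,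
    fun ⟨a, ha⟩ => ⟨Denumerable.ofNat α a, fun b => ?_⟩⟩⟩
  · simpa only [Denumerable.ofNat_encode] using ha (Denumerable.ofNat β b)
  · simpa only [Denumerable.ofNat_encode] using ha (Encodable.encode b)

theorem sigma02_of_computable_presentation_general (K : Set (ℕ → ℕ))
    (hAC : ∀ f : ℕ → ℕ, AlmostConst f → f ∈ K)
    (hpres : CompPres (KtildeR K)) :
    Sigma02 (A0 ∪ (A2 K \ A1)) := by
  obtain ⟨μ, hmem, hsurj, ⟨e₀, he₀⟩, ⟨d₁, hd₁c, hd₁⟩, ⟨d₂, hd₂c, hd₂⟩⟩ := hpres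
  obtain ⟨i₁, hi₁⟩ := hsurj 1 (one_mem_KtildeR hAC)
  let P : AdditiveNumbering := ⟨μ, d₁, d₂, hd₁, hd₂, e₀, he₀, i₁, hi₁⟩
  have hV : ∀ i, ∃ j, P.μ j = ((2 : ℝ) ^ i)⁻¹ := fun i => hsurj _ (inv_two_pow_mem_KtildeR hAC i)
  have hW : ∀ g : ℕ → ℕ, (∀ i, g i ≤ 2) → ∀ i, ∃ j, P.μ j = partialFbar g i :=
    fun g hg i => hsurj _ (partialFbar_mem_KtildeR hAC hg i)
  convert sigma02_of_computable (P.computable_matrix hd₁c hd₂c) using 1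
  ext n
  rw [mem_A0_union_iff hAC, Set.mem_ofPred_eq, P.exists_forall_matrix_iff hV hW]
  refine and_congr_right fun _ => ⟨fun ⟨x, hx, h⟩ => ?_, fun ⟨k, h⟩ => ⟨μ k, hmem k, h⟩⟩
  obtain ⟨k, rfl⟩ := hsurj x hx
  exact ⟨k, h⟩

/-- If the structure `(K̃, 0, Q³₊, Q³₋)` generated by a class `K` of total computable
functions with `AC ⊆ K` has a computable presentation, then `A₀ ∪ (A₂ \ A₁)` is `Σ⁰₂`. -/
theorem sigma02_of_computable_presentation (K : Set (ℕ → ℕ))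
    (hKcomp : ∀ f ∈ K, Computable f) (hAC : ∀ f : ℕ → ℕ, AlmostConst f → f ∈ K)
    (hpres : CompPres (KtildeR K)) :
    Sigma02 (A0 ∪ (A2 K \ A1)) :=
  sigma02_of_computable_presentation_general K hAC hpres
end

section
/- Let s ≥ 1 and let (A₀,…,A_{s−1}) be an s-tuple of c.e. subsets of ℕ. The following are equivalent: (1) (A₀,…,A_{s−1}) is m-complete in the class of s-tuples of c.e. subsets of ℕ; (2) there is a total computable H : ℕ^s → ℕ such that for all x̄ = (x₀,…,x_{s−1}) and all i < s, H(x̄) ∈ A_i ↔ H(x̄) ∈ W_{x_i}; (3) there is an s-tuple of functions (F₀,…,F_{s−1}) with (F₀,…,F_{s−1}) ≤_m (A₀,…,A_{s−1}) and W_{F_i(x̄)} ≠ W_{x_i} for all x̄ and all i < s; (4) there is an s-tuple of functions (F₀,…,F_{s−1}) with (F₀,…,F_{s−1}) ≤_m (A₀,…,A_{s−1}) and φ_{F_i(x̄)} ≠ φ_{x_i} for all x̄ and all i < s. -/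
/-- `W_e`, the domain of `φ_e`. -/
def Wset (e : ℕ) : Set ℕ := {x : ℕ | (phi e x).Dom}

/-- m-reducibility of `s`-tuples of subsets of `ℕ`. -/
def TupleMRed {s : ℕ} (X A : Fin s → Set ℕ) : Prop :=
  ∃ h : ℕ → ℕ, Computable h ∧ ∀ (i : Fin s) (n : ℕ), n ∈ X i ↔ h n ∈ A i

/-- m-reducibility of an `s`-tuple of functions `F_i : ℕ^s → ℕ` to an `s`-tuple of
subsets of `ℕ`: there are computable `h, a_i, b_i` with `F_i(x̄) = a_i(x̄)` when
`h(x̄) ∈ A_i` and `F_i(x̄) = b_i(x̄)` when `h(x̄) ∉ A_i`. -/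
def FunTupleMRed {s : ℕ} (F : Fin s → (Fin s → ℕ) → ℕ) (A : Fin s → Set ℕ) : Prop :=
  ∃ (h : (Fin s → ℕ) → ℕ) (a b : Fin s → (Fin s → ℕ) → ℕ),
    Computable h ∧ (∀ i : Fin s, Computable (a i)) ∧ (∀ i : Fin s, Computable (b i)) ∧
    ∀ (x : Fin s → ℕ) (i : Fin s),
      (h x ∈ A i → F i x = a i x) ∧ (h x ∉ A i → F i x = b i x)

/-- A set is computably enumerable if it is `W_e` for some `e`. -/
def CE (S : Set ℕ) : Prop := ∃ e : ℕ, S = Wset e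

/-- `(A₀,…,A_{s−1})` is m-complete in the class of `s`-tuples of c.e. sets. -/
def MCompleteCE {s : ℕ} (A : Fin s → Set ℕ) : Prop :=
  (∀ i : Fin s, CE (A i)) ∧
  ∀ X : Fin s → Set ℕ, (∀ i : Fin s, CE (X i)) → TupleMRed X A

/-! (1) ⇒ (2): reduce the c.e. tuple `X_i = {m | φ_m(i)↓}` to `A` by `g`, and use the recursion
theorem with parameter `x̄` to find `m(x̄)` with `φ_{m(x̄)}(i) ≃ φ_{x_i}(g(m(x̄)))`; then
`H = g ∘ m`. (2) ⇒ (1): choose `x̄(n)` with `W_{x_i(n)} = ℕ` or `∅` according as `n ∈ X_i`.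
(2) ⇒ (3): let `F_i(x̄)` be an index of `∅` if `H(x̄) ∈ A_i` and of `ℕ` otherwise.
(4) ⇒ (1): by the recursion theorem for tuples, build `x̄(n)` such that `φ_{x_i(n)}` waits until
`n` enters `X_i` or `h(x̄(n))` enters `A_i`, and then copies `φ_{b_i(x̄(n))}`, respectively
`φ_{a_i(x̄(n))}`. Either event happening without the other would make `φ_{F_i(x̄(n))} = φ_{x_i(n)}`,
so `n ∈ X_i ↔ h(x̄(n)) ∈ A_i`. -/

open Encodable Denumerable
open Nat.Partrec (Code)

lemma phi_encode (c : Code) : phi (encode c) = c.eval := by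
  simp [phi]

lemma partrec₂_phi : Partrec₂ phi :=
  Code.eval_part.comp ((Computable.ofNat Code).comp .fst) .snd

lemma exists_phi_eq {f : ℕ →. ℕ} (hf : Partrec f) : ∃ e, phi e = f := by
  obtain ⟨c, hc⟩ := Code.exists_code.1 (Partrec.nat_iff.1 hf)
  exact ⟨encode c, by rw [phi_encode, hc]⟩

lemma Wset_congr {e e' : ℕ} (h : phi e = phi e') : Wset e = Wset e' := by
  simp only [Wset, h]

lemma ce_setOf_dom {f : ℕ →. ℕ} (hf : Partrec f) : CE {x | (f x).Dom} := by
  obtain ⟨e, he⟩ := exists_phi_eq hf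
  exact ⟨e, by rw [Wset, he]⟩

section FinTuples

variable {α σ : Type*} [Primcodable α] [Primcodable σ] {s : ℕ}

theorem Computable.fin_curry₁ {f : Fin s → α → σ} : Computable₂ f ↔ ∀ i, Computable (f i) :=
  ⟨fun h i => h.comp (.const i) .id, fun h =>
    (Computable.vector_get.comp ((Computable.vector_ofFn h).comp .snd) .fst).of_eq
      fun _ => by simp⟩

theorem Computable.fin_curry {f : α → Fin s → σ} : Computable f ↔ Computable₂ f :=
  ⟨fun h => Computable.fin_app.comp (h.comp .fst) .snd, fun h =>
    (Primrec.vector_get'.to_comp.comp (Computable.vector_ofFn fun i =>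
      show Computable fun a => f a i from h.comp .id (.const i))).of_eq fun _ => by funext; simp⟩

end FinTuples

section Recursion

variable {α : Type*} [Primcodable α]

theorem exists_computable_fixedPoint {q : α → ℕ → ℕ →. ℕ}
    (hq : Partrec₂ fun (p : α × ℕ) (y : ℕ) => q p.1 p.2 y) :
    ∃ n : α → ℕ, Computable n ∧ ∀ a, phi (n a) = q a (n a) := by
  let f : Code → ℕ →. ℕ := fun c w =>
    (decode (α := α) w.unpair.1 : Part α).bind
      fun a => q a (encode (c.curry w.unpair.1)) w.unpair.2
  have hf : Partrec₂ f := by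
    have hw : Computable fun p : Code × ℕ => p.2.unpair := Computable.unpair.comp .snd
    refine ((Computable.decode.comp (Computable.fst.comp hw)).ofOption).bind ?_
    exact hq.comp (Computable.snd.pair (Computable.encode.comp
      (Code.primrec₂_curry.to_comp.comp (Computable.fst.comp .fst)
        (Computable.fst.comp (hw.comp .fst))))) (Computable.snd.comp (hw.comp .fst))
  obtain ⟨c, hc⟩ := Code.fixed_point₂ hf
  refine ⟨fun a => encode (c.curry (encode a)),
    Computable.encode.comp (Code.primrec₂_curry.to_comp.comp (.const c) .encode),
    fun a => funext fun y => ?_⟩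
  simp [phi_encode, Code.eval_curry, hc, f]

theorem exists_computable_fixedPoint_fin {s : ℕ} {q : α → (Fin s → ℕ) → Fin s → ℕ →. ℕ}
    (hq : Partrec₂ fun (p : (α × (Fin s → ℕ)) × Fin s) (y : ℕ) => q p.1.1 p.1.2 p.2 y) :
    ∃ x : α → Fin s → ℕ, Computable x ∧ ∀ a i, phi (x a i) = q a (x a) i := by
  let xs : ℕ → Fin s → ℕ := fun m i => encode ((ofNat Code m).curry (encode i))
  have hxs : Computable xs := Computable.fin_curry.2 <|
    Computable.encode.comp (Code.primrec₂_curry.to_comp.comp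
      ((Computable.ofNat Code).comp .fst) (Computable.encode.comp .snd))
  have phi_xs (m : ℕ) (i : Fin s) (y : ℕ) : phi (xs m i) y = phi m (Nat.pair (encode i) y) := by
    simp [xs, Code.eval_curry, phi]
  obtain ⟨n, hn, hfix⟩ := exists_computable_fixedPoint (q := fun a m w =>
    (decode (α := Fin s) w.unpair.1 : Part (Fin s)).bind fun i => q a (xs m) i w.unpair.2)
    (by
      have hw : Computable fun p : (α × ℕ) × ℕ => p.2.unpair := Computable.unpair.comp .snd
      refine ((Computable.decode.comp (Computable.fst.comp hw)).ofOption).bind ?_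
      exact hq.comp (((Computable.fst.comp (Computable.fst.comp .fst)).pair
        (hxs.comp (Computable.snd.comp (Computable.fst.comp .fst)))).pair .snd)
        (Computable.snd.comp (hw.comp .fst)))
  exact ⟨fun a => xs (n a), hxs.comp hn, fun a i => funext fun y => by
    simp [phi_xs, hfix]⟩

theorem exists_computable_index_fin {s : ℕ} {f : α → Fin s → ℕ →. ℕ}
    (hf : Partrec₂ fun (p : α × Fin s) (y : ℕ) => f p.1 p.2 y) :
    ∃ x : α → Fin s → ℕ, Computable x ∧ ∀ a i, phi (x a i) = f a i :=
  exists_computable_fixedPoint_fin (q := fun a _ i => f a i)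
    (hf.comp ((Computable.fst.comp .fst).pair .snd |>.comp .fst) .snd)

end Recursion

lemma exists_partrec_race {α σ τ : Type*} [Primcodable α] [Primcodable σ] [Primcodable τ]
    {f : α →. σ} {g : α →. τ} (hf : Partrec f) (hg : Partrec g) :
    ∃ r : α →. Bool, Partrec r ∧ ∀ a,
      ((f a).Dom → ¬(g a).Dom → r a = Part.some true) ∧
      ((g a).Dom → ¬(f a).Dom → r a = Part.some false) := by
  obtain ⟨r, hr, hspec⟩ := Partrec.merge' (hf.map (Computable.const true).to₂)
    (hg.map (Computable.const false).to₂)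
  refine ⟨r, hr, fun a => ⟨fun hfa hga => ?_, fun hga hfa => ?_⟩⟩
  all_goals
    have hdom : (r a).Dom := (hspec a).2.2 (by simp [hfa, hga])
    have hmem := (hspec a).1 _ (Part.get_mem hdom)
    simp only [Part.mem_map_iff] at hmem
    rw [Part.eq_some_iff]
  · obtain ⟨_, hx, hval⟩ | ⟨_, hx, -⟩ := hmem
    · exact hval ▸ Part.get_mem hdom
    · exact absurd (Part.dom_iff_mem.2 ⟨_, hx⟩) hga
  · obtain ⟨_, hx, -⟩ | ⟨_, hx, hval⟩ := hmem
    · exact absurd (Part.dom_iff_mem.2 ⟨_, hx⟩) hfa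
    · exact hval ▸ Part.get_mem hdom

section Criterion

variable {s : ℕ} {A : Fin s → Set ℕ}

def IsProductive (A : Fin s → Set ℕ) (H : (Fin s → ℕ) → ℕ) : Prop :=
  Computable H ∧ ∀ (x : Fin s → ℕ) (i : Fin s), H x ∈ A i ↔ H x ∈ Wset (x i)

theorem MCompleteCE.exists_isProductive (hA : MCompleteCE A) : ∃ H, IsProductive A H := by
  obtain ⟨g, hg, hgX⟩ := hA.2 (fun i => {m | (phi m (encode i)).Dom}) fun i =>
    ce_setOf_dom (partrec₂_phi.comp .id (.const _))
  obtain ⟨n, hn, hfix⟩ := exists_computable_fixedPoint (q := fun (x : Fin s → ℕ) m z =>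
    (decode (α := Fin s) z : Part (Fin s)).bind fun i => phi (x i) (g m))
    (by
      refine (Computable.decode.comp .snd).ofOption.bind ?_
      exact partrec₂_phi.comp
        (Computable.fin_app.comp (Computable.fst.comp (Computable.fst.comp .fst)) .snd)
        (hg.comp (Computable.snd.comp (Computable.fst.comp .fst))))
  refine ⟨fun x => g (n x), hg.comp hn, fun x i => ?_⟩
  have hX : n x ∈ {m | (phi m (encode i)).Dom} ↔ g (n x) ∈ Wset (x i) := by
    simp [hfix, Wset]
  rw [← hgX, hX]

theorem mCompleteCE_of_isProductive (hA : ∀ i, CE (A i)) {H : (Fin s → ℕ) → ℕ}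
    (hH : IsProductive A H) : MCompleteCE A := by
  refine ⟨hA, fun X hX => ?_⟩
  choose c hc using hX
  obtain ⟨x, hx, hphi⟩ := exists_computable_index_fin (f := fun n i (_ : ℕ) => phi (c i) n)
    (partrec₂_phi.comp (Computable.fin_app.comp (.const c) (Computable.snd.comp .fst))
      (Computable.fst.comp .fst))
  refine ⟨fun n => H (x n), hH.1.comp hx, fun i n => ?_⟩
  rw [hH.2, hc]
  simp [Wset, hphi]

theorem exists_funTupleMRed_Wset_ne_of_isProductive {H : (Fin s → ℕ) → ℕ}
    (hH : IsProductive A H) :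
    ∃ F : Fin s → (Fin s → ℕ) → ℕ, FunTupleMRed F A ∧
      ∀ (x : Fin s → ℕ) (i : Fin s), Wset (F i x) ≠ Wset (x i) := by
  classical
  obtain ⟨e₀, he₀⟩ := exists_phi_eq (Partrec.none (α := ℕ) (σ := ℕ))
  obtain ⟨e₁, he₁⟩ := exists_phi_eq (Computable.const 0 : Computable fun _ : ℕ => 0)
  refine ⟨fun i x => if H x ∈ A i then e₀ else e₁,
    ⟨H, fun _ _ => e₀, fun _ _ => e₁, hH.1, fun _ => .const _, fun _ => .const _,
      fun x i => ⟨fun h => if_pos h, fun h => if_neg h⟩⟩, fun x i hW => ?_⟩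
  have hmem := hH.2 x i
  rw [← hW] at hmem
  by_cases h : H x ∈ A i <;> simp [h, Wset, he₀, he₁] at hmem

theorem mCompleteCE_of_funTupleMRed_phi_ne (hA : ∀ i, CE (A i))
    {F : Fin s → (Fin s → ℕ) → ℕ} (hF : FunTupleMRed F A)
    (hne : ∀ (x : Fin s → ℕ) (i : Fin s), phi (F i x) ≠ phi (x i)) : MCompleteCE A := by
  obtain ⟨h, a, b, hh, ha, hb, hFab⟩ := hF
  refine ⟨hA, fun X hX => ?_⟩
  choose c hc using hX
  choose d hd using hA
  obtain ⟨r, hr, hrace⟩ := exists_partrec_race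
    (f := fun p : ℕ × (Fin s → ℕ) × Fin s => phi (c p.2.2) p.1)
    (g := fun p => phi (d p.2.2) (h p.2.1))
    (partrec₂_phi.comp (Computable.fin_app.comp (.const c) (Computable.snd.comp .snd)) .fst)
    (partrec₂_phi.comp (Computable.fin_app.comp (.const d) (Computable.snd.comp .snd))
      (hh.comp (Computable.fst.comp .snd)))
  obtain ⟨x, hx, hfix⟩ := exists_computable_fixedPoint_fin (q := fun n x i y =>
    (r (n, x, i)).bind fun t => phi (bif t then b i x else a i x) y)
    (by
      have hi : Computable fun q : (((ℕ × (Fin s → ℕ)) × Fin s) × ℕ) × Bool => q.1.1.2 :=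
        Computable.snd.comp (Computable.fst.comp .fst)
      have hx : Computable fun q : (((ℕ × (Fin s → ℕ)) × Fin s) × ℕ) × Bool => q.1.1.1.2 :=
        Computable.snd.comp (Computable.fst.comp (Computable.fst.comp .fst))
      refine (hr.comp ((Computable.fst.comp (Computable.fst.comp .fst)).pair
        ((Computable.snd.comp (Computable.fst.comp .fst)).pair
          (Computable.snd.comp .fst)))).bind ?_
      exact partrec₂_phi.comp (Computable.cond .snd ((Computable.fin_curry₁.2 hb).comp hi hx)
        ((Computable.fin_curry₁.2 ha).comp hi hx)) (Computable.snd.comp .fst))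
  refine ⟨fun n => h (x n), hh.comp hx, fun i n => ?_⟩
  have hrace := hrace (n, x n, i)
  rw [hc]
  constructor
  · intro hn
    by_contra hA'
    apply hne (x n) i
    rw [(hFab _ i).2 hA', hfix, hrace.1 hn (by rwa [hd] at hA')]
    simp
  · intro hA'
    by_contra hn
    apply hne (x n) i
    rw [(hFab _ i).1 hA', hfix, hrace.2 (by rwa [hd] at hA') hn]
    simp

end Criterion

theorem mComplete_ce_criterion_general {s : ℕ} (A : Fin s → Set ℕ)
    (hA : ∀ i : Fin s, CE (A i)) :
    (MCompleteCE A ↔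
      ∃ H : (Fin s → ℕ) → ℕ, Computable H ∧
        ∀ (x : Fin s → ℕ) (i : Fin s), (H x ∈ A i ↔ H x ∈ Wset (x i))) ∧
    (MCompleteCE A ↔
      ∃ F : Fin s → (Fin s → ℕ) → ℕ, FunTupleMRed F A ∧
        ∀ (x : Fin s → ℕ) (i : Fin s), Wset (F i x) ≠ Wset (x i)) ∧
    (MCompleteCE A ↔
      ∃ F : Fin s → (Fin s → ℕ) → ℕ, FunTupleMRed F A ∧
        ∀ (x : Fin s → ℕ) (i : Fin s), phi (F i x) ≠ phi (x i)) := by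
  have h12 : MCompleteCE A → ∃ H, IsProductive A H := MCompleteCE.exists_isProductive
  have h21 : (∃ H, IsProductive A H) → MCompleteCE A := fun ⟨_, hH⟩ =>
    mCompleteCE_of_isProductive hA hH
  have h23 : (∃ H, IsProductive A H) → _ := fun ⟨_, hH⟩ =>
    exists_funTupleMRed_Wset_ne_of_isProductive hH
  have h34 : (∃ F : Fin s → (Fin s → ℕ) → ℕ, FunTupleMRed F A ∧
      ∀ x i, Wset (F i x) ≠ Wset (x i)) →
      ∃ F : Fin s → (Fin s → ℕ) → ℕ, FunTupleMRed F A ∧ ∀ x i, phi (F i x) ≠ phi (x i) :=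
    fun ⟨F, hF, hne⟩ => ⟨F, hF, fun x i h => hne x i (Wset_congr h)⟩
  have h41 : (∃ F : Fin s → (Fin s → ℕ) → ℕ, FunTupleMRed F A ∧
      ∀ x i, phi (F i x) ≠ phi (x i)) → MCompleteCE A := fun ⟨_, hF, hne⟩ =>
    mCompleteCE_of_funTupleMRed_phi_ne hA hF hne
  exact ⟨⟨h12, h21⟩, ⟨h23 ∘ h12, h41 ∘ h34⟩, ⟨h34 ∘ h23 ∘ h12, h41⟩⟩

/-- Criterion of m-completeness for `s`-tuples of c.e. sets: m-completeness is
equivalent to the existence of a productive function `H`, and to the existence of an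
m-reducible tuple of functions `(F₀,…,F_{s−1})` with `W_{F_i(x̄)} ≠ W_{x_i}`
(respectively `φ_{F_i(x̄)} ≠ φ_{x_i}`). -/
theorem mComplete_ce_criterion {s : ℕ} (hs : 1 ≤ s) (A : Fin s → Set ℕ)
    (hA : ∀ i : Fin s, CE (A i)) :
    (MCompleteCE A ↔
      ∃ H : (Fin s → ℕ) → ℕ, Computable H ∧
        ∀ (x : Fin s → ℕ) (i : Fin s), (H x ∈ A i ↔ H x ∈ Wset (x i))) ∧
    (MCompleteCE A ↔
      ∃ F : Fin s → (Fin s → ℕ) → ℕ, FunTupleMRed F A ∧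
        ∀ (x : Fin s → ℕ) (i : Fin s), Wset (F i x) ≠ Wset (x i)) ∧
    (MCompleteCE A ↔
      ∃ F : Fin s → (Fin s → ℕ) → ℕ, FunTupleMRed F A ∧
        ∀ (x : Fin s → ℕ) (i : Fin s), phi (F i x) ≠ phi (x i)) :=
  mComplete_ce_criterion_general A hA
end

section
/- For j ∈ {0,1,2} let E_j = {n | range(φₙ) ⊆ {0,1,2} and (Wₙ is finite or {k ∈ Wₙ | φₙ(k) = j} is finite)}. Then the 3-tuple (E₀, E₁, E₂) is m-complete in the class of 3-tuples of Σ⁰₂ subsets of ℕ: each E_j is Σ⁰₂, and every 3-tuple of Σ⁰₂ subsets of ℕ is ≤_m-reducible to (E₀, E₁, E₂). -/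
/-- `E_j = {n | range(φₙ) ⊆ {0,1,2} and (Wₙ is finite or {k ∈ Wₙ | φₙ(k) = j} is finite)}`. -/
def Eset (j : ℕ) : Set ℕ :=
  {n : ℕ | (∀ x m : ℕ, m ∈ phi n x → m ∈ ({0, 1, 2} : Set ℕ)) ∧
    ((Wset n).Finite ∨ {k : ℕ | j ∈ phi n k}.Finite)}

/-!
`E_j` is `Σ⁰₂`: the range condition is `Π⁰₁`, and "`W_e` is finite" or "`φ_e⁻¹(j)` is finite"
says that an r.e. subset of `ℕ` is bounded, which is `Σ⁰₂`; `Σ⁰₂` is closed under `∩` and `∪`.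

For completeness write `n ∈ X_i ↔ ∃ a, ∀ b, R_i(n, a, b)`. The set of `t` such that every `a < t`
is refuted by some `b` is an r.e. initial segment of `ℕ`, and it is finite iff `n ∈ X_i`. By the
s-m-n theorem there is a computable `h` such that `φ_{h(n)}(3t + i) = i` exactly when `t` lies in
the initial segment for `X_i`. So the fibre of `φ_{h(n)}` over `i` is finite iff `n ∈ X_i`, and as
it lies inside `W_{h(n)}`, finiteness of `W_{h(n)}` adds nothing.
-/

open Nat.Partrec (Code)

theorem Computable.comp_map_witness {R : ℕ × ℕ × ℕ → Bool} (hR : Computable R) {f : ℕ → ℕ}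
    (hf : Computable f) : Computable fun q : ℕ × ℕ × ℕ => R (q.1, f q.2.1, q.2.2) :=
  hR.comp <| Computable.fst.pair <| (hf.comp (Computable.fst.comp Computable.snd)).pair
    (Computable.snd.comp Computable.snd)

theorem Nat.forall_unpair_iff {p : ℕ → ℕ → Prop} :
    (∀ b : ℕ, p b.unpair.1 b.unpair.2) ↔ ∀ x y, p x y :=
  ⟨fun h x y => by simpa using h (Nat.pair x y), fun h _ => h _ _⟩

section Sigma02

variable {S T : Set ℕ}

theorem Sigma02.inter (hS : Sigma02 S) (hT : Sigma02 T) : Sigma02 (S ∩ T) := by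
  obtain ⟨R, hR, rfl⟩ := hS
  obtain ⟨R', hR', rfl⟩ := hT
  have hc : Computable fun q : ℕ × ℕ × ℕ =>
      R (q.1, q.2.1.unpair.1, q.2.2) && R' (q.1, q.2.1.unpair.2, q.2.2) :=
    (Primrec.and.to_comp.comp (hR.comp_map_witness (Computable.fst.comp Computable.unpair))
      (hR'.comp_map_witness (Computable.snd.comp Computable.unpair)) :)
  refine ⟨_, hc, ?_⟩
  ext n
  simp only [Set.mem_inter_iff, Set.mem_ofPred_eq, Bool.and_eq_true, forall_and]
  constructor
  · rintro ⟨⟨a, ha⟩, ⟨a', ha'⟩⟩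
    exact ⟨Nat.pair a a', by simpa using ha, by simpa using ha'⟩
  · rintro ⟨a, ha, ha'⟩
    exact ⟨⟨_, ha⟩, ⟨_, ha'⟩⟩

theorem Sigma02.union (hS : Sigma02 S) (hT : Sigma02 T) : Sigma02 (S ∪ T) := by
  obtain ⟨R, hR, rfl⟩ := hS
  obtain ⟨R', hR', rfl⟩ := hT
  have hc : Computable fun q : ℕ × ℕ × ℕ => bif q.2.1.unpair.1 = 0
      then R (q.1, q.2.1.unpair.2, q.2.2) else R' (q.1, q.2.1.unpair.2, q.2.2) :=
    (Computable.cond (Primrec.eq.comp ((Primrec.fst.comp Primrec.unpair).comp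
      (Primrec.fst.comp Primrec.snd)) (Primrec.const 0)).decide.to_comp
      (hR.comp_map_witness (Computable.snd.comp Computable.unpair))
      (hR'.comp_map_witness (Computable.snd.comp Computable.unpair)) :)
  refine ⟨_, hc, ?_⟩
  ext n
  simp only [Set.mem_union, Set.mem_ofPred_eq]
  constructor
  · rintro (⟨a, ha⟩ | ⟨a, ha⟩)
    · exact ⟨Nat.pair 0 a, by simpa using ha⟩
    · exact ⟨Nat.pair 1 a, by simpa using ha⟩
  · rintro ⟨a, ha⟩
    by_cases h : a.unpair.1 = 0
    · exact Or.inl ⟨_, by simpa [h] using ha⟩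
    · exact Or.inr ⟨_, by simpa [h] using ha⟩

theorem sigma02_forall {P : ℕ × ℕ → Bool} (hP : Computable P) :
    Sigma02 {n | ∀ b, P (n, b) = true} :=
  ⟨fun q => P (q.1, q.2.2), hP.comp (Computable.fst.pair (Computable.snd.comp Computable.snd)),
    by ext; simp⟩

theorem sigma02_finite {Q : ℕ × ℕ × ℕ → Bool} (hQ : Computable Q) :
    Sigma02 {n | {x | ∃ k, Q (n, k, x) = true}.Finite} := by
  have hc : Computable fun q : ℕ × ℕ × ℕ =>
      decide (q.2.2.unpair.2 ≤ q.2.1) || !Q (q.1, q.2.2.unpair.1, q.2.2.unpair.2) :=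
    Primrec.or.to_comp.comp
      (Primrec.nat_le.comp ((Primrec.snd.comp Primrec.unpair).comp
        (Primrec.snd.comp Primrec.snd)) (Primrec.fst.comp Primrec.snd)).decide.to_comp
      (Primrec.not.to_comp.comp (hQ.comp (Computable.fst.pair
        (((Computable.fst.comp Computable.unpair).comp (Computable.snd.comp Computable.snd)).pair
        ((Computable.snd.comp Computable.unpair).comp (Computable.snd.comp Computable.snd))))))
  refine ⟨_, hc, ?_⟩
  ext n
  simp only [Set.mem_ofPred_eq, Set.finite_iff_bddAbove, bddAbove_def, Bool.or_eq_true,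
    decide_eq_true_eq, Bool.not_eq_true']
  refine exists_congr fun d => ?_
  rw [Nat.forall_unpair_iff (p := fun k x => x ≤ d ∨ Q (n, k, x) = false)]
  constructor
  · intro h k x
    rw [or_iff_not_imp_right, Bool.not_eq_false]
    exact fun hq => h x ⟨k, hq⟩
  · rintro h x ⟨k, hk⟩
    simpa [hk] using h k x

end Sigma02

def evalnNat (n k x : ℕ) : Option ℕ :=
  Nat.Partrec.Code.evaln k (Denumerable.ofNat Code n) x

theorem primrec_evalnNat : Primrec fun q : ℕ × ℕ × ℕ => evalnNat q.1 q.2.1 q.2.2 :=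
  Nat.Partrec.Code.primrec_evaln.comp <|
    ((Primrec.fst.comp Primrec.snd).pair ((Primrec.ofNat Code).comp Primrec.fst)).pair
      (Primrec.snd.comp Primrec.snd)

theorem mem_phi_iff {n x m : ℕ} : m ∈ phi n x ↔ ∃ k, evalnNat n k x = some m :=
  Nat.Partrec.Code.evaln_complete

theorem Wset_eq (n : ℕ) : Wset n = {x | ∃ k, (evalnNat n k x).isSome = true} := by
  ext x
  simp only [Wset, Set.mem_ofPred_eq, Part.dom_iff_mem, mem_phi_iff, Option.isSome_iff_exists]
  exact exists_comm

theorem forall_mem_phi_le_iff (n c : ℕ) : (∀ x m, m ∈ phi n x → m ≤ c) ↔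
    ∀ b : ℕ, decide ((evalnNat n b.unpair.1 b.unpair.2).getD 0 ≤ c) = true := by
  simp only [decide_eq_true_eq, mem_phi_iff,
    Nat.forall_unpair_iff (p := fun k x => (evalnNat n k x).getD 0 ≤ c)]
  constructor
  · intro h k x
    cases hk : evalnNat n k x
    · simp
    · exact h x _ ⟨k, hk⟩
  · rintro h x m ⟨k, hk⟩
    simpa [hk] using h k x

theorem sigma02_Eset (j : ℕ) : Sigma02 (Eset j) := by
  have hrange : Sigma02 {n | ∀ x m, m ∈ phi n x → m ∈ ({0, 1, 2} : Set ℕ)} := by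
    have h012 (m : ℕ) : m ∈ ({0, 1, 2} : Set ℕ) ↔ m ≤ 2 := by
      simp only [Set.mem_insert_iff, Set.mem_singleton_iff]
      omega
    simp only [h012, forall_mem_phi_le_iff]
    exact sigma02_forall (Primrec.nat_le.comp (Primrec.option_getD.comp
      (primrec_evalnNat.comp (Primrec.fst.pair ((Primrec.fst.comp Primrec.unpair).comp
        Primrec.snd |>.pair ((Primrec.snd.comp Primrec.unpair).comp Primrec.snd))))
      (Primrec.const 0)) (Primrec.const 2)).decide.to_comp
  have hW : Sigma02 {n | (Wset n).Finite} := by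
    simp only [Wset_eq]
    exact sigma02_finite (Primrec.option_isSome.comp primrec_evalnNat).to_comp
  have hfibre : Sigma02 {n | {x | j ∈ phi n x}.Finite} := by
    simp only [mem_phi_iff]
    simpa using sigma02_finite
      (Primrec.eq.comp primrec_evalnNat (Primrec.const (some j))).decide.to_comp
  exact hrange.inter (hW.union hfibre)

theorem Sigma02.exists_uniform {s : ℕ} {X : Fin s → Set ℕ} (hX : ∀ i, Sigma02 (X i)) :
    ∃ R : ℕ → ℕ × ℕ × ℕ → Bool, Computable₂ R ∧
      ∀ i : Fin s, X i = {n | ∃ a, ∀ b, R i (n, a, b) = true} := by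
  choose R hR hXR using hX
  refine ⟨fun i q => (List.ofFn fun j => R j q)[i]?.getD true, ?_, fun i => ?_⟩
  · exact (Computable.option_getD (Computable.list_getElem?.comp
      (Computable.list_ofFn fun j => (hR j).comp Computable.snd) Computable.fst)
      (Computable.const true) :)
  · simp [hXR i]

theorem Nat.rfind_lift_dom_iff (p : ℕ → Bool) :
    (Nat.rfind (PFun.lift p)).Dom ↔ ∃ n, p n = true :=
  ⟨fun h => ⟨_, (Part.mem_some_iff.1 (Nat.rfind_spec (Part.get_mem h))).symm⟩,
    fun ⟨_, hn⟩ => Part.dom_iff_mem.2 ((Nat.rfind_min' hn).imp fun _ => And.left)⟩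

section Refutation

variable (R : ℕ × ℕ × ℕ → Bool)

def refuteBelow (n t : ℕ) : Part ℕ :=
  t.rec (Part.some 0) fun a IH => IH.bind fun _ => Nat.rfind (PFun.lift fun b => !R (n, a, b))

theorem refuteBelow_dom_iff (n t : ℕ) :
    (refuteBelow R n t).Dom ↔ ∀ a < t, ∃ b, R (n, a, b) = false := by
  induction t with
  | zero => simp [refuteBelow]
  | succ t ih =>
    change (∃ _ : (refuteBelow R n t).Dom, _) ↔ _
    simp only [exists_prop, ih, Nat.rfind_lift_dom_iff, Bool.not_eq_true',
      Nat.forall_lt_succ_right]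

theorem exists_forall_iff_finite_refuted (n : ℕ) :
    (∃ a, ∀ b, R (n, a, b) = true) ↔ {t | ∀ a < t, ∃ b, R (n, a, b) = false}.Finite := by
  constructor
  · rintro ⟨a, ha⟩
    refine (Set.finite_Iic a).subset fun t ht => ?_
    by_contra! hat
    obtain ⟨b, hb⟩ := ht a (not_le.1 hat)
    simp [ha b] at hb
  · intro hfin
    by_contra! h
    refine Set.infinite_univ (hfin.subset fun t _ a _ => ?_)
    simpa using h a

end Refutation

theorem partrec_refuteBelow {R : ℕ → ℕ × ℕ × ℕ → Bool} (hR : Computable₂ R) :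
    Partrec fun p : ℕ × ℕ × ℕ => refuteBelow (R p.1) p.2.1 p.2.2 := by
  have hstep : Computable₂ fun (q : (ℕ × ℕ × ℕ) × ℕ × ℕ) (b : ℕ) =>
      !R q.1.1 (q.1.2.1, q.2.1, b) :=
    Primrec.not.to_comp.comp (hR.comp (Computable.fst.comp (Computable.fst.comp Computable.fst))
      (((Computable.fst.comp Computable.snd).comp (Computable.fst.comp Computable.fst)).pair
        ((Computable.fst.comp Computable.snd).comp Computable.fst |>.pair Computable.snd)))
  exact Partrec.nat_rec (Computable.snd.comp Computable.snd) (Computable.const 0).partrec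
    (Partrec.rfind hstep.partrec₂).to₂

theorem exists_computable_phi_eq {f : ℕ → ℕ →. ℕ} (hf : Partrec₂ f) :
    ∃ h : ℕ → ℕ, Computable h ∧ ∀ n, phi (h n) = f n := by
  obtain ⟨c, hc⟩ := Nat.Partrec.Code.exists_code.1 (Partrec₂.unpaired'.2 hf)
  refine ⟨fun n => Encodable.encode (Nat.Partrec.Code.curry c n),
    Computable.encode.comp (Nat.Partrec.Code.primrec₂_curry.to_comp.comp (Computable.const c)
      Computable.id), fun n => funext fun x => ?_⟩
  simp [phi, Nat.Partrec.Code.eval_curry, hc]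

theorem setOf_mod_eq_and_div_mem {s i : ℕ} (hi : i < s) (D : Set ℕ) :
    {x | x % s = i ∧ x / s ∈ D} = (fun t => s * t + i) '' D := by
  ext x
  constructor
  · rintro ⟨rfl, hx⟩
    exact ⟨x / s, hx, Nat.div_add_mod x s⟩
  · rintro ⟨t, ht, rfl⟩
    have hs : 0 < s := by omega
    refine ⟨by simp [Nat.add_mod, Nat.mod_eq_of_lt hi], ?_⟩
    rwa [Nat.mul_add_div hs, Nat.div_eq_of_lt hi, add_zero]

theorem exists_reduction_to_finite_fibres {s : ℕ} (hs : 0 < s) {X : Fin s → Set ℕ}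
    (hX : ∀ i, Sigma02 (X i)) :
    ∃ h : ℕ → ℕ, Computable h ∧ ∀ n, (∀ x m, m ∈ phi (h n) x → m < s) ∧
      ∀ i : Fin s, n ∈ X i ↔ {x | (i : ℕ) ∈ phi (h n) x}.Finite := by
  obtain ⟨R, hR, hXR⟩ := Sigma02.exists_uniform hX
  have hmod : Computable fun q : ℕ × ℕ => q.2 % s :=
    (Primrec.nat_mod.comp Primrec.snd (Primrec.const s)).to_comp
  have hψ : Partrec₂ fun n x => (refuteBelow (R (x % s)) n (x / s)).map fun _ => x % s :=
    ((partrec_refuteBelow hR).comp (hmod.pair (Computable.fst.pair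
      (Primrec.nat_div.comp Primrec.snd (Primrec.const s)).to_comp))).map
      (hmod.comp Computable.fst).to₂
  obtain ⟨h, hh, hφ⟩ := exists_computable_phi_eq hψ
  have hmem (n x m : ℕ) : m ∈ phi (h n) x ↔
      m = x % s ∧ ∀ a < x / s, ∃ b, R (x % s) (n, a, b) = false := by
    rw [hφ, Part.mem_map_iff, ← refuteBelow_dom_iff, Part.dom_iff_mem]
    exact ⟨fun ⟨a, ha, hm⟩ => ⟨hm.symm, a, ha⟩, fun ⟨hm, a, ha⟩ => ⟨a, ha, hm.symm⟩⟩
  refine ⟨h, hh, fun n => ⟨fun x m hm => (hmem n x m).1 hm |>.1 ▸ Nat.mod_lt x hs, fun i => ?_⟩⟩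
  have hfibre : {x | (i : ℕ) ∈ phi (h n) x} =
      {x | x % s = i ∧ x / s ∈ {t | ∀ a < t, ∃ b, R i (n, a, b) = false}} := by
    ext x
    simp only [hmem, Set.mem_ofPred_eq]
    exact ⟨fun ⟨hi, hx⟩ => ⟨hi.symm, hi ▸ hx⟩, fun ⟨hi, hx⟩ => ⟨hi.symm, hi ▸ hx⟩⟩
  rw [hfibre, setOf_mod_eq_and_div_mem i.isLt,
    Set.finite_image_iff fun a _ b _ hab => by simpa [hs.ne'] using hab, hXR i]
  exact exists_forall_iff_finite_refuted (R i) n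

theorem mem_Eset_iff {e : ℕ} (he : ∀ x m, m ∈ phi e x → m < 3) (j : ℕ) :
    e ∈ Eset j ↔ {k | j ∈ phi e k}.Finite := by
  have hsub : {k | j ∈ phi e k} ⊆ Wset e := fun _ hk => Part.dom_iff_mem.2 ⟨j, hk⟩
  refine ⟨fun ⟨_, hfin⟩ => hfin.elim (·.subset hsub) id,
    fun hfin => ⟨fun x m hm => ?_, Or.inr hfin⟩⟩
  have := he x m hm
  simp only [Set.mem_insert_iff, Set.mem_singleton_iff]
  omega

/-- `(E₀, E₁, E₂)` is m-complete in the class of 3-tuples of `Σ⁰₂` subsets of `ℕ`. -/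
theorem Eset_mComplete :
    (∀ j : Fin 3, Sigma02 (Eset (j : ℕ))) ∧
    ∀ X : Fin 3 → Set ℕ, (∀ i : Fin 3, Sigma02 (X i)) →
      TupleMRed X (fun j : Fin 3 => Eset (j : ℕ)) := by
  refine ⟨fun j => sigma02_Eset j, fun X hX => ?_⟩
  obtain ⟨h, hh, hred⟩ := exists_reduction_to_finite_fibres three_pos hX
  exact ⟨h, hh, fun i n => (hred n).2 i |>.trans (mem_Eset_iff (hred n).1 i).symm⟩
end

section
/- Let (Z₀, Z₁, Z₂) be a 3-tuple of Σ⁰₂ subsets of ℕ with Z₀ ⊆ Z₁ ⊆ Z₂ that is m-complete in the class of 3-tuples (X₀, X₁, X₂) of Σ⁰₂ subsets of ℕ satisfying X₀ ⊆ X₁ ⊆ X₂. Then the set Z₀ ∪ (Z₂ \ Z₁) is not Σ⁰₂. -/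
/-!
If `S := Z 0 ∪ (Z 2 \ Z 1)` were `Σ⁰₂`, so would be the nested tuple
`(∅, {e | φ_e(e)↓ ∈ S}, {e | φ_e(e)↓})`, and completeness would give a computable reduction `h`
of it to `Z`. Diagonalise at an index `e` of `h` itself, so that `φ_e(e) = h(e) =: m`: the reduction
forces `m ∈ Z 2` and `m ∉ Z 0`, hence `m ∈ S ↔ m ∉ Z 1`, while `φ_e(e) ∈ S ↔ m ∈ Z 1`.
-/

open Nat.Partrec.Code

lemma sigma02_empty : Sigma02 (∅ : Set ℕ) :=
  ⟨fun _ => false, Computable.const false, by ext n; simp⟩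

lemma sigma02_univ : Sigma02 (Set.univ : Set ℕ) :=
  ⟨fun _ => true, Computable.const true, by ext n; simp⟩

lemma Sigma02.preimage_partrec {f : ℕ →. ℕ} (hf : Partrec f) {S : Set ℕ} (hS : Sigma02 S) :
    Sigma02 {n | ∃ v ∈ f n, v ∈ S} := by
  obtain ⟨c, rfl⟩ := exists_code.1 (Partrec.nat_iff.1 hf)
  obtain ⟨R, hR, rfl⟩ := hS
  -- the existential witness `p` codes both a halting time `p.unpair.1` and a witness for `R`
  refine ⟨fun x => ((evaln x.2.1.unpair.1 c x.1).map
      fun v => R (v, x.2.1.unpair.2, x.2.2)).getD false, ?_, ?_⟩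
  · refine Computable.option_getD (Computable.option_map ?_ ?_) (Computable.const false)
    · exact (primrec_evaln.comp (((Primrec.fst.comp Primrec.unpair).comp
        (Primrec.fst.comp Primrec.snd)).pair (Primrec.const c) |>.pair Primrec.fst)).to_comp
    · exact hR.comp (Computable.snd.pair
        ((((Primrec.snd.comp Primrec.unpair).comp
            (Primrec.fst.comp (Primrec.snd.comp Primrec.fst))).to_comp).pair
          (Primrec.snd.comp (Primrec.snd.comp Primrec.fst)).to_comp))
  · ext n
    simp only [Set.mem_ofPred_eq]
    constructor
    · rintro ⟨v, hv, a, ha⟩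
      obtain ⟨k, hk⟩ := evaln_complete.1 hv
      refine ⟨Nat.pair k a, fun b => ?_⟩
      simpa only [Nat.unpair_pair, Option.mem_def.1 hk, Option.map_some, Option.getD_some]
        using ha b
    · rintro ⟨p, hp⟩
      rcases hev : evaln p.unpair.1 c n with _ | v
      · simpa [hev] using hp 0
      · exact ⟨v, evaln_sound hev, p.unpair.2, fun b => by simpa [hev] using hp b⟩

lemma partrec_phi_self : Partrec fun e => phi e e :=
  eval_part.comp (Computable.ofNat Nat.Partrec.Code) Computable.id

lemma Sigma02.phi_self_mem {S : Set ℕ} (hS : Sigma02 S) : Sigma02 {e | ∃ v ∈ phi e e, v ∈ S} :=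
  hS.preimage_partrec partrec_phi_self

lemma sigma02_phi_self_dom : Sigma02 {e | (phi e e).Dom} := by
  simpa [Part.dom_iff_mem] using sigma02_univ.phi_self_mem

lemma exists_phi_eq_some {h : ℕ → ℕ} (hh : Computable h) :
    ∃ e, phi e = fun n => Part.some (h n) := by
  obtain ⟨c, hc⟩ := exists_code.1 (Partrec.nat_iff.1 hh.partrec)
  exact ⟨Encodable.encode c, by rw [phi, Denumerable.ofNat_encode, hc]; rfl⟩

def diagTuple (S : Set ℕ) : Fin 3 → Set ℕ :=
  ![∅, {e | ∃ v ∈ phi e e, v ∈ S}, {e | (phi e e).Dom}]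

lemma sigma02_diagTuple {S : Set ℕ} (hS : Sigma02 S) (i : Fin 3) : Sigma02 (diagTuple S i) := by
  fin_cases i
  exacts [sigma02_empty, hS.phi_self_mem, sigma02_phi_self_dom]

lemma diagTuple_zero_subset_one (S : Set ℕ) : diagTuple S 0 ⊆ diagTuple S 1 :=
  Set.empty_subset _

lemma diagTuple_one_subset_two (S : Set ℕ) : diagTuple S 1 ⊆ diagTuple S 2 :=
  fun _ ⟨v, hv, _⟩ => Part.dom_iff_mem.2 ⟨v, hv⟩

lemma not_tupleMRed_diagTuple (Z : Fin 3 → Set ℕ) :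
    ¬ TupleMRed (diagTuple (Z 0 ∪ (Z 2 \ Z 1))) Z := by
  rintro ⟨h, hh, hred⟩
  obtain ⟨e, he⟩ := exists_phi_eq_some hh
  have hZ2 : h e ∈ Z 2 := (hred 2 e).1 (by simp [diagTuple, he])
  have hZ0 : h e ∉ Z 0 := fun hmem => (hred 0 e).2 hmem
  have hX1 : e ∈ diagTuple (Z 0 ∪ (Z 2 \ Z 1)) 1 ↔ h e ∉ Z 1 := by
    simp [diagTuple, he, hZ0, hZ2]
  exact iff_not_self ((hred 1 e).symm.trans hX1)

theorem not_sigma02_of_nested_mComplete_general (Z : Fin 3 → Set ℕ)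
    (hcomp : ∀ X : Fin 3 → Set ℕ, (∀ i : Fin 3, Sigma02 (X i)) → X 0 ⊆ X 1 → X 1 ⊆ X 2 →
      TupleMRed X Z) :
    ¬ Sigma02 (Z 0 ∪ (Z 2 \ Z 1)) := fun hS =>
  not_tupleMRed_diagTuple Z <| hcomp _ (sigma02_diagTuple hS)
    (diagTuple_zero_subset_one _) (diagTuple_one_subset_two _)

/-- If `(Z₀, Z₁, Z₂)` is a nested 3-tuple of `Σ⁰₂` sets that is m-complete in the class
of nested 3-tuples of `Σ⁰₂` sets, then `Z₀ ∪ (Z₂ \ Z₁)` is not `Σ⁰₂`. -/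
theorem not_sigma02_of_nested_mComplete (Z : Fin 3 → Set ℕ)
    (hZ : ∀ i : Fin 3, Sigma02 (Z i)) (h01 : Z 0 ⊆ Z 1) (h12 : Z 1 ⊆ Z 2)
    (hcomp : ∀ X : Fin 3 → Set ℕ, (∀ i : Fin 3, Sigma02 (X i)) → X 0 ⊆ X 1 → X 1 ⊆ X 2 →
      TupleMRed X Z) :
    ¬ Sigma02 (Z 0 ∪ (Z 2 \ Z 1)) :=
  not_sigma02_of_nested_mComplete_general Z hcomp
end

section
/- Let F be a field and μ : ℕ → F a surjection such that there are total computable functions p, t, ng with μ(p(n,m)) = μ(n) + μ(m), μ(t(n,m)) = μ(n)·μ(m) and μ(ng(n)) = −μ(n) for all n, m, and there is an index e₁ with μ(e₁) = 1. If the set {(n,m) | μ(n) = μ(m)} is computably enumerable, then it is computable (decidable). ("Positive numbered fields are computable.") -/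
/-!
Equality in a numbered field is c.e. by hypothesis, and so is disequality: `μ n ≠ μ m` holds
exactly when `μ n - μ m` has an inverse, i.e. when some index `k` satisfies
`μ k * (μ n - μ m) = 1`, and that is an equality between the elements indexed by
`t k (p n (ng m))` and `e₁`. A relation that is c.e. with c.e. complement is decidable
(Post's theorem).
-/

theorem REPred.of_exists_computable {α : Type*} [Primcodable α] {R : α × ℕ → Bool}
    (hR : Computable R) : REPred fun x => ∃ a, R (x, a) = true := by
  have hsearch : Partrec fun x => Nat.rfind fun a => Part.some (R (x, a)) :=
    Partrec.rfind (hR.comp (Computable.pair Computable.fst Computable.snd)).partrec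
  refine hsearch.dom_re.of_eq fun x => Nat.rfind_dom.trans ?_
  exact ⟨fun ⟨a, ha, _⟩ => ⟨a, (Part.mem_some_iff.1 ha).symm⟩,
    fun ⟨a, ha⟩ => ⟨a, Part.mem_some_iff.2 ha.symm, fun _ => trivial⟩⟩

theorem REPred.of_exists_exists_computable {α : Type*} [Primcodable α]
    {R : (α × ℕ) × ℕ → Bool} (hR : Computable R) :
    REPred fun x => ∃ k a, R ((x, k), a) = true := by
  have hunpair : Computable fun y : α × ℕ => y.2.unpair := Computable.unpair.comp Computable.snd
  have hR' : Computable fun y : α × ℕ => R ((y.1, y.2.unpair.1), y.2.unpair.2) :=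
    hR.comp ((Computable.fst.pair (Computable.fst.comp hunpair)).pair
      (Computable.snd.comp hunpair))
  refine (REPred.of_exists_computable hR').of_eq fun x => ?_
  exact ⟨fun ⟨c, hc⟩ => ⟨_, _, hc⟩, fun ⟨k, a, h⟩ => ⟨Nat.pair k a, by simpa using h⟩⟩

theorem ne_iff_exists_mul_add_neg_eq_one {K : Type*} [DivisionRing K] {a b : K} :
    a ≠ b ↔ ∃ c, c * (a + -b) = 1 := by
  rw [← sub_eq_add_neg]
  refine ⟨fun h => ⟨(a - b)⁻¹, inv_mul_cancel₀ (sub_ne_zero.2 h)⟩, ?_⟩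
  rintro ⟨c, hc⟩ rfl
  simp at hc

/-- Positive numbered fields are computable: if `(F, μ)` is a numbered field (addition,
multiplication and negation are computably realized and `1` has an index) and the
equality relation `{(n,m) | μ(n) = μ(m)}` is computably enumerable, then it is
computable (decidable). -/
theorem positive_numbered_field_computable (F : Type*) [Field F]
    (μ : ℕ → F) (hsurj : Function.Surjective μ)
    (p t : ℕ → ℕ → ℕ) (ng : ℕ → ℕ)
    (hp : Computable₂ p) (ht : Computable₂ t) (hng : Computable ng)
    (hadd : ∀ n m : ℕ, μ (p n m) = μ n + μ m)
    (hmul : ∀ n m : ℕ, μ (t n m) = μ n * μ m)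
    (hneg : ∀ n : ℕ, μ (ng n) = -μ n)
    (e₁ : ℕ) (hone : μ e₁ = 1)
    (hce : ∃ R : (ℕ × ℕ) × ℕ → Bool, Computable R ∧
      ∀ n m : ℕ, (μ n = μ m ↔ ∃ a : ℕ, R ((n, m), a) = true)) :
    ∃ d : ℕ × ℕ → Bool, Computable d ∧ ∀ n m : ℕ, (d (n, m) = true ↔ μ n = μ m) := by
  obtain ⟨R, hR, hRspec⟩ := hce
  have heq_re : REPred fun x : ℕ × ℕ => μ x.1 = μ x.2 :=
    (REPred.of_exists_computable hR).of_eq fun x => (hRspec x.1 x.2).symm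
  have hinv_index : Computable fun y : (ℕ × ℕ) × ℕ => (t y.2 (p y.1.1 (ng y.1.2)), e₁) :=
    (ht.comp Computable.snd (hp.comp (Computable.fst.comp Computable.fst)
      (hng.comp (Computable.snd.comp Computable.fst)))).pair (Computable.const e₁)
  have hne_re : REPred fun x : ℕ × ℕ => μ x.1 ≠ μ x.2 := by
    refine (REPred.of_exists_exists_computable
      (hR.comp ((hinv_index.comp Computable.fst).pair Computable.snd))).of_eq fun ⟨n, m⟩ => ?_
    simp only [← hRspec, hmul, hadd, hneg, hone]
    rw [ne_iff_exists_mul_add_neg_eq_one, hsurj.exists]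
  obtain ⟨_, hd⟩ := ComputablePred.computable_iff_re_compl_re'.2 ⟨heq_re, hne_re⟩
  exact ⟨_, hd, fun n m => decide_eq_true_iff⟩
end
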